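/- arXiv:1905.08290 — 5 statements merged into one kernel-verified Lean document; each statement's English description precedes it below -/
import Mathlib

section
/- Let H be a real Hilbert space, f : H → (-∞,+∞] proper, convex, lower semicontinuous, c > 0, A* A + (1/c)M positive with constant α/c > 0 in the sense that cA*A + M ⪰ αI, where A : H → G is a continuous linear operator to a Hilbert space G and M ∈ S₊(H). Define S(u) = argmin_{x ∈ H} ( f(x) + (c/2)(‖Ax‖² − ‖x‖²) + (1/2)‖x‖²_M + (c/2)‖x − u‖² ). Then S is well-defined (single-valued) and Lipschitz continuous with constant c/α: ‖S(u) − S(v)‖ ≤ (c/α)‖u − v‖ for all u, v ∈ H. -/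
open scoped RealInnerProductSpace
open Set Filter Topology

section AuxStmt1

variable {H G : Type*} [NormedAddCommGroup H] [InnerProductSpace ℝ H]
  [NormedAddCommGroup G] [InnerProductSpace ℝ G]

/-- The quadratic part of the objective. -/
noncomputable def qf (A : H →L[ℝ] G) (M : H →L[ℝ] H) (c : ℝ) (u x : H) : ℝ :=
  (c / 2) * (‖A x‖ ^ 2 - ‖x‖ ^ 2) + (1 / 2) * ⟪x, M x⟫ + (c / 2) * ‖x - u‖ ^ 2

lemma quadId (A : H →L[ℝ] G) (M : H →L[ℝ] H) (hMsym : ∀ x y : H, ⟪M x, y⟫ = ⟪x, M y⟫)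
    (c : ℝ) (u : H) (a b : ℝ) (hab : a + b = 1) (x y : H) :
    qf A M c u (a • x + b • y)
      = a * qf A M c u x + b * qf A M c u y
        - (a * b / 2) * (c * ‖A (x - y)‖ ^ 2 + ⟪M (x - y), x - y⟫) := by
  obtain rfl : b = 1 - a := by linarith
  simp only [qf, ← real_inner_self_eq_norm_sq, map_add, map_smul, map_sub,
    inner_add_left, inner_add_right, inner_sub_left, inner_sub_right,
    real_inner_smul_left, real_inner_smul_right, smul_eq_mul]
  have h1 : ⟪y, x⟫ = ⟪x, y⟫ := real_inner_comm x y
  have h2 : ⟪A y, A x⟫ = ⟪A x, A y⟫ := real_inner_comm _ _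
  have h3 : ⟪M y, x⟫ = ⟪M x, y⟫ := by rw [real_inner_comm, hMsym x y]
  have h4 : ⟪y, M x⟫ = ⟪M x, y⟫ := real_inner_comm _ _
  have h5 : ⟪x, M y⟫ = ⟪M x, y⟫ := (hMsym x y).symm
  have h6 : ⟪y, M y⟫ = ⟪M y, y⟫ := real_inner_comm _ _
  have h7 : ⟪x, M x⟫ = ⟪M x, x⟫ := real_inner_comm _ _
  have h8 : ⟪u, x⟫ = ⟪x, u⟫ := real_inner_comm _ _
  have h9 : ⟪u, y⟫ = ⟪y, u⟫ := real_inner_comm _ _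
  rw [h1, h2, h3, h4, h5, h6, h7, h8, h9]
  ring

lemma qf_lb (A : H →L[ℝ] G) (M : H →L[ℝ] H) (c α : ℝ) (hc : 0 < c)
    (hstrong : ∀ x : H, α * ‖x‖ ^ 2 ≤ c * ‖A x‖ ^ 2 + ⟪M x, x⟫) (u x : H) :
    (α / 2) * ‖x‖ ^ 2 - c * ‖x‖ * ‖u‖ ≤ qf A M c u x := by
  have h1 := hstrong x
  have h2 : ⟪x, M x⟫ = ⟪M x, x⟫ := real_inner_comm _ _
  have h3 : ‖x - u‖ ^ 2 = ‖x‖ ^ 2 - 2 * ⟪x, u⟫ + ‖u‖ ^ 2 := norm_sub_sq_real x u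
  have h4 : ⟪x, u⟫ ≤ ‖x‖ * ‖u‖ := real_inner_le_norm x u
  have h5 : 0 ≤ ‖u‖ ^ 2 := sq_nonneg _
  simp only [qf, h2, h3]
  nlinarith

lemma qf_diff (A : H →L[ℝ] G) (M : H →L[ℝ] H) (c : ℝ) (u v x : H) :
    qf A M c u x - qf A M c v x
      = c * ⟪x, v - u⟫ + (c / 2) * (‖u‖ ^ 2 - ‖v‖ ^ 2) := by
  have h3 : ‖x - u‖ ^ 2 = ‖x‖ ^ 2 - 2 * ⟪x, u⟫ + ‖u‖ ^ 2 := norm_sub_sq_real x u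
  have h4 : ‖x - v‖ ^ 2 = ‖x‖ ^ 2 - 2 * ⟪x, v⟫ + ‖v‖ ^ 2 := norm_sub_sq_real x v
  simp only [qf, h3, h4, inner_sub_right]
  ring

lemma qf_cont (A : H →L[ℝ] G) (M : H →L[ℝ] H) (c : ℝ) (u : H) :
    Continuous (qf A M c u) := by
  unfold qf
  have h1 : Continuous fun x : H => ⟪x, M x⟫ :=
    continuous_inner.comp (continuous_id.prodMk M.continuous)
  continuity

lemma growth_aux (α : ℝ) (D : Set H) (g : H → ℝ)
    (hcombo : ∀ x ∈ D, ∀ y ∈ D, ∀ a b : ℝ, 0 ≤ a → 0 ≤ b → a + b = 1 →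
      a • x + b • y ∈ D ∧ g (a • x + b • y) ≤ a * g x + b * g y - a * b * (α / 2) * ‖x - y‖ ^ 2)
    (s : H) (hs : s ∈ D) (hmin : ∀ x ∈ D, g s ≤ g x) (x : H) (hx : x ∈ D) :
    g s + (α / 2) * ‖x - s‖ ^ 2 ≤ g x := by
  have key : ∀ t : ℝ, 0 < t → t < 1 → g s + (1 - t) * (α / 2) * ‖x - s‖ ^ 2 ≤ g x := by
    intro t ht0 ht1
    obtain ⟨hzD, hz⟩ := hcombo x hx s hs t (1 - t) ht0.le (by linarith) (by ring)
    have h1 := hmin _ hzD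
    nlinarith
  have he : Tendsto (fun n : ℕ => 1 / ((n : ℝ) + 2)) atTop (𝓝 0) := by
    have h := (tendsto_one_div_add_atTop_nhds_zero_nat (𝕜 := ℝ)).comp (tendsto_add_atTop_nat 1)
    convert h using 1
    funext n
    simp only [Function.comp_apply]
    push_cast
    ring
  have ht : Tendsto (fun n : ℕ => g s + (1 - 1 / ((n : ℝ) + 2)) * (α / 2) * ‖x - s‖ ^ 2)
      atTop (𝓝 (g s + (1 - 0) * (α / 2) * ‖x - s‖ ^ 2)) :=
    (((tendsto_const_nhds.sub he).mul_const _).mul_const _).const_add _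
  rw [show (1 : ℝ) - 0 = 1 by ring, one_mul] at ht
  refine le_of_tendsto ht (Filter.Eventually.of_forall fun n => ?_)
  refine key _ (by positivity) ?_
  rw [div_lt_one (by positivity)]
  have : (0:ℝ) ≤ (n:ℝ) := Nat.cast_nonneg n
  linarith

lemma exists_min_aux [CompleteSpace H] (α : ℝ) (hα : 0 < α) (D : Set H) (x₀ : H) (hx₀ : x₀ ∈ D)
    (g : H → ℝ)
    (hcombo : ∀ x ∈ D, ∀ y ∈ D, ∀ a b : ℝ, 0 ≤ a → 0 ≤ b → a + b = 1 →
      a • x + b • y ∈ D ∧ g (a • x + b • y) ≤ a * g x + b * g y - a * b * (α / 2) * ‖x - y‖ ^ 2)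
    (hbdd : BddBelow (g '' D))
    (hcl : ∀ (x : ℕ → H) (s : H) (L : ℝ), (∀ n, x n ∈ D) → Tendsto x atTop (𝓝 s) →
      Tendsto (fun n => g (x n)) atTop (𝓝 L) → s ∈ D ∧ g s ≤ L) :
    ∃ s ∈ D, ∀ x ∈ D, g s ≤ g x := by
  set m := sInf (g '' D) with hm
  have hne : (g '' D).Nonempty := ⟨g x₀, mem_image_of_mem _ hx₀⟩
  have hsel : ∀ n : ℕ, ∃ y ∈ D, g y < m + 1 / ((n : ℝ) + 1) := by
    intro n
    obtain ⟨a, ha, hlt⟩ := Real.lt_sInf_add_pos hne (by positivity : (0:ℝ) < 1 / ((n:ℝ) + 1))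
    obtain ⟨y, hyD, rfl⟩ := ha
    exact ⟨y, hyD, hlt⟩
  choose x hxD hxlt using hsel
  have hmle : ∀ y ∈ D, m ≤ g y := fun y hy => csInf_le hbdd (mem_image_of_mem _ hy)
  have hdist : ∀ (N p q : ℕ), N ≤ p → N ≤ q →
      dist (x p) (x q) ≤ Real.sqrt ((8 / α) * (1 / ((N : ℝ) + 1))) := by
    intro N p q hp hq
    obtain ⟨hzD, hz⟩ := hcombo (x p) (hxD p) (x q) (hxD q) (1/2) (1/2)
      (by norm_num) (by norm_num) (by norm_num)
    have h1 := hmle _ hzD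
    have h2 : (1:ℝ) / ((p:ℝ) + 1) ≤ 1 / ((N:ℝ) + 1) := by
      apply one_div_le_one_div_of_le (by positivity)
      have : (N:ℝ) ≤ (p:ℝ) := Nat.cast_le.mpr hp
      linarith
    have h3 : (1:ℝ) / ((q:ℝ) + 1) ≤ 1 / ((N:ℝ) + 1) := by
      apply one_div_le_one_div_of_le (by positivity)
      have : (N:ℝ) ≤ (q:ℝ) := Nat.cast_le.mpr hq
      linarith
    have h4 := hxlt p
    have h5 := hxlt q
    have h6 : ‖x p - x q‖ ^ 2 ≤ (8 / α) * (1 / ((N : ℝ) + 1)) := by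
      rw [div_mul_eq_mul_div, le_div_iff₀ hα]
      nlinarith
    rw [dist_eq_norm, ← Real.sqrt_sq (norm_nonneg (x p - x q))]
    exact Real.sqrt_le_sqrt h6
  have hb0 : Tendsto (fun N : ℕ => Real.sqrt ((8 / α) * (1 / ((N : ℝ) + 1)))) atTop (𝓝 0) := by
    have h := tendsto_one_div_add_atTop_nhds_zero_nat.const_mul (8 / α)
    rw [mul_zero] at h
    have h2 := (Real.continuous_sqrt.tendsto 0).comp h
    rwa [Real.sqrt_zero] at h2
  have hc : CauchySeq x := cauchySeq_of_le_tendsto_0 _ (fun p q N hp hq => hdist N p q hp hq) hb0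
  obtain ⟨s, hs⟩ := cauchySeq_tendsto_of_complete hc
  have hg : Tendsto (fun n => g (x n)) atTop (𝓝 m) := by
    have hup : Tendsto (fun n : ℕ => m + 1 / ((n : ℝ) + 1)) atTop (𝓝 (m + 0)) :=
      tendsto_const_nhds.add tendsto_one_div_add_atTop_nhds_zero_nat
    rw [add_zero] at hup
    exact tendsto_of_tendsto_of_tendsto_of_le_of_le tendsto_const_nhds hup
      (fun n => hmle _ (hxD n)) (fun n => (hxlt n).le)
  obtain ⟨hsD, hgs⟩ := hcl x s m hxD hs hg
  exact ⟨s, hsD, fun y hy => hgs.trans (hmle y hy)⟩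

end AuxStmt1

/-- Convex subdifferential of an extended-real-valued function. -/
noncomputable def subdiff {H : Type*} [NormedAddCommGroup H] [InnerProductSpace ℝ H]
    (f : H → EReal) (x : H) : Set H :=
  {u | ∀ x' : H, f x + ((⟪u, x' - x⟫ : ℝ) : EReal) ≤ f x'}

theorem stmt1 {H G : Type*} [NormedAddCommGroup H] [InnerProductSpace ℝ H] [CompleteSpace H]
    [NormedAddCommGroup G] [InnerProductSpace ℝ G] [CompleteSpace G]
    (f : H → EReal)
    (hproper : (∃ x, f x ≠ ⊤) ∧ ∀ x, f x ≠ ⊥)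
    (hconv : ∀ x y : H, ∀ a b : ℝ, 0 ≤ a → 0 ≤ b → a + b = 1 →
      f (a • x + b • y) ≤ (a : EReal) * f x + (b : EReal) * f y)
    (hlsc : LowerSemicontinuous f)
    (A : H →L[ℝ] G) (M : H →L[ℝ] H)
    (hMsym : ∀ x y : H, ⟪M x, y⟫ = ⟪x, M y⟫) (hMpos : ∀ x : H, 0 ≤ ⟪M x, x⟫)
    (c α : ℝ) (hc : 0 < c) (hα : 0 < α)
    (hstrong : ∀ x : H, α * ‖x‖ ^ 2 ≤ c * ‖A x‖ ^ 2 + ⟪M x, x⟫) :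
    -- the objective defining S(u)
    let obj : H → H → EReal := fun u x =>
      f x + (((c / 2) * (‖A x‖ ^ 2 - ‖x‖ ^ 2) + (1 / 2) * ⟪x, M x⟫
        + (c / 2) * ‖x - u‖ ^ 2 : ℝ) : EReal)
    -- S is well defined (the argmin exists and is unique) ...
    (∀ u : H, ∃! s : H, IsMinOn (obj u) univ s) ∧
    -- ... and S is Lipschitz continuous with constant c/α
    (∀ u v su sv : H, IsMinOn (obj u) univ su → IsMinOn (obj v) univ sv →
      ‖su - sv‖ ≤ (c / α) * ‖u - v‖) := by
  intro obj
  obtain ⟨⟨x₀, hx₀⟩, hbot⟩ := hproper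
  set D : Set H := {x | f x ≠ ⊤} with hD
  set fr : H → ℝ := fun x => (f x).toReal with hfr
  have hx₀D : x₀ ∈ D := hx₀
  have hcoe : ∀ x ∈ D, f x = ((fr x : ℝ) : EReal) := fun x hx =>
    (EReal.coe_toReal hx (hbot x)).symm
  set gg : H → H → ℝ := fun u x => fr x + qf A M c u x with hgg
  have hobj : ∀ u x, obj u x = f x + ((qf A M c u x : ℝ) : EReal) := fun u x => rfl
  have hobjD : ∀ u, ∀ x ∈ D, obj u x = ((gg u x : ℝ) : EReal) := by
    intro u x hx
    rw [hobj, hcoe x hx, hgg, ← EReal.coe_add]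
  have hobjT : ∀ u, ∀ x, x ∉ D → obj u x = ⊤ := by
    intro u x hx
    have : f x = ⊤ := not_not.mp hx
    rw [hobj, this, EReal.top_add_coe]
  -- convexity of fr on D
  have hfconv : ∀ x ∈ D, ∀ y ∈ D, ∀ a b : ℝ, 0 ≤ a → 0 ≤ b → a + b = 1 →
      a • x + b • y ∈ D ∧ fr (a • x + b • y) ≤ a * fr x + b * fr y := by
    intro x hx y hy a b ha hb hab
    have h1 := hconv x y a b ha hb hab
    rw [hcoe x hx, hcoe y hy, ← EReal.coe_mul, ← EReal.coe_mul, ← EReal.coe_add] at h1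
    have hzD : a • x + b • y ∈ D := ne_top_of_le_ne_top (EReal.coe_ne_top _) h1
    refine ⟨hzD, ?_⟩
    rw [hcoe _ hzD] at h1
    exact EReal.coe_le_coe_iff.mp h1
  -- strong convexity of gg u on D
  have hcombo : ∀ u : H, ∀ x ∈ D, ∀ y ∈ D, ∀ a b : ℝ, 0 ≤ a → 0 ≤ b → a + b = 1 →
      a • x + b • y ∈ D ∧
        gg u (a • x + b • y) ≤ a * gg u x + b * gg u y - a * b * (α / 2) * ‖x - y‖ ^ 2 := by
    intro u x hx y hy a b ha hb hab
    obtain ⟨hzD, hfz⟩ := hfconv x hx y hy a b ha hb hab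
    refine ⟨hzD, ?_⟩
    have hq := quadId A M hMsym c u a b hab x y
    have hst := hstrong (x - y)
    have hab2 : (0:ℝ) ≤ a * b / 2 := by positivity
    have h8 := mul_le_mul_of_nonneg_left hst hab2
    simp only [hgg]
    nlinarith [h8, hq, hfz]
  -- characterization of minimizers
  have hmin_iff : ∀ u s, IsMinOn (obj u) univ s ↔ (s ∈ D ∧ ∀ x ∈ D, gg u s ≤ gg u x) := by
    intro u s
    constructor
    · intro h
      have h' : ∀ x, obj u s ≤ obj u x := fun x => isMinOn_iff.mp h x (mem_univ x)
      have hne : obj u s ≠ ⊤ := by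
        refine ne_top_of_le_ne_top ?_ (h' x₀)
        rw [hobjD u x₀ hx₀D]
        exact EReal.coe_ne_top _
      have hsD : s ∈ D := by
        by_contra hs
        rw [hobjT u s hs] at hne
        exact hne rfl
      refine ⟨hsD, fun x hx => ?_⟩
      have := h' x
      rw [hobjD u s hsD, hobjD u x hx] at this
      exact EReal.coe_le_coe_iff.mp this
    · rintro ⟨hsD, hle⟩
      refine isMinOn_iff.mpr fun x _ => ?_
      by_cases hx : x ∈ D
      · rw [hobjD u s hsD, hobjD u x hx]
        exact EReal.coe_le_coe_iff.mpr (hle x hx)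
      · rw [hobjT u x hx]
        exact le_top
  -- lower bound for fr on D via lower semicontinuity
  have hlow : ∃ K > 0, ∀ x ∈ D, fr x₀ - 1 - K * ‖x - x₀‖ ≤ fr x := by
    have hlt : ((fr x₀ - 1 : ℝ) : EReal) < f x₀ := by
      rw [hcoe x₀ hx₀D]
      exact_mod_cast (by linarith : fr x₀ - 1 < fr x₀)
    have hev := hlsc x₀ _ hlt
    rw [Metric.eventually_nhds_iff] at hev
    obtain ⟨δ, hδ, hball⟩ := hev
    refine ⟨4 / δ, by positivity, ?_⟩
    intro x hx
    by_cases hfar : ‖x - x₀‖ ≤ δ / 2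
    · have hxb : dist x x₀ < δ := by rw [dist_eq_norm]; linarith
      have h2 : f x > _ := hball hxb
      rw [hcoe x hx] at h2
      have h2' : fr x₀ - 1 < fr x := EReal.coe_lt_coe_iff.mp h2
      have hn : 0 ≤ (4/δ) * ‖x - x₀‖ := by positivity
      linarith
    · push_neg at hfar
      have hrpos : 0 < ‖x - x₀‖ := lt_trans (by positivity) hfar
      set r := ‖x - x₀‖ with hrdef
      set t := (δ/2) / r with htdef
      have ht0 : 0 < t := by positivity
      have ht1 : t < 1 := by rw [htdef, div_lt_one hrpos]; exact hfar
      obtain ⟨hzD, hz⟩ := hfconv x₀ hx₀D x hx (1 - t) t (by linarith) ht0.le (by ring)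
      set z := (1 - t) • x₀ + t • x with hzdef
      have hzx : z - x₀ = t • (x - x₀) := by rw [hzdef]; module
      have hzn : ‖z - x₀‖ = δ / 2 := by
        rw [hzx, norm_smul, Real.norm_eq_abs, abs_of_pos ht0, htdef, ← hrdef]
        field_simp
      have hzb : dist z x₀ < δ := by rw [dist_eq_norm, hzn]; linarith
      have h2 : f z > _ := hball hzb
      rw [hcoe _ hzD] at h2
      have h2' : fr x₀ - 1 < fr z := EReal.coe_lt_coe_iff.mp h2
      have key : -1 ≤ t * (fr x - fr x₀) := by nlinarith
      have h10 : fr x₀ - fr x ≤ 1 / t :=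
        (le_div_iff₀ ht0).mpr (by nlinarith : (fr x₀ - fr x) * t ≤ 1)
      have h11 : 1 / t = 2 * r / δ := by
        rw [htdef]
        field_simp
      rw [h11] at h10
      have h12 : 4 / δ * r = 2 * (2 * r / δ) := by ring
      have h13 : 0 ≤ 2 * r / δ := by positivity
      linarith
  obtain ⟨K, hK0, hKb⟩ := hlow
  -- bounded below
  have hbdd : ∀ u : H, BddBelow (gg u '' D) := by
    intro u
    refine ⟨fr x₀ - 1 - K * ‖x₀‖ - (K + c * ‖u‖)^2 / (2 * α), ?_⟩
    rintro y ⟨x, hx, rfl⟩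
    have h1 := hKb x hx
    have h2 := qf_lb A M c α hc hstrong u x
    have h3 : ‖x - x₀‖ ≤ ‖x‖ + ‖x₀‖ := norm_sub_le x x₀
    have h4 : 0 ≤ ‖x‖ := norm_nonneg x
    have h5 := sq_nonneg (α * ‖x‖ - (K + c * ‖u‖))
    have h6 : 0 ≤ ‖u‖ := norm_nonneg u
    have hy : -((K + c * ‖u‖) ^ 2) / (2 * α) ≤ (α / 2) * ‖x‖ ^ 2 - (K + c * ‖u‖) * ‖x‖ := by
      rw [div_le_iff₀ (by positivity : (0:ℝ) < 2 * α)]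
      nlinarith [h5]
    rw [neg_div] at hy
    simp only [hgg]
    nlinarith [mul_le_mul_of_nonneg_left h3 hK0.le, hy, h1, h2]
  -- closedness condition
  have hcl : ∀ u : H, ∀ (xs : ℕ → H) (s : H) (L : ℝ), (∀ n, xs n ∈ D) →
      Tendsto xs atTop (𝓝 s) → Tendsto (fun n => gg u (xs n)) atTop (𝓝 L) →
      s ∈ D ∧ gg u s ≤ L := by
    intro u xs s L hxsD hxs hgL
    have hq : Tendsto (fun n => qf A M c u (xs n)) atTop (𝓝 (qf A M c u s)) :=
      ((qf_cont A M c u).tendsto s).comp hxs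
    have hfs : f s ≤ ((L - qf A M c u s : ℝ) : EReal) := by
      by_contra hcon
      push_neg at hcon
      obtain ⟨rr, hr1, hr2⟩ := EReal.exists_between_coe_real hcon
      have hev := hlsc s _ hr2
      have hev2 := hxs.eventually hev
      have hfr : (fun n => rr + qf A M c u (xs n)) ≤ᶠ[atTop] fun n => gg u (xs n) := by
        filter_upwards [hev2] with n hn
        rw [hcoe _ (hxsD n)] at hn
        have := EReal.coe_lt_coe_iff.mp hn
        simp only [hgg]
        linarith
      have hlim : rr + qf A M c u s ≤ L :=
        le_of_tendsto_of_tendsto (tendsto_const_nhds.add hq) hgL hfr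
      have hrl : L - qf A M c u s < rr := EReal.coe_lt_coe_iff.mp hr1
      linarith
    have hsD : s ∈ D := ne_top_of_le_ne_top (EReal.coe_ne_top _) hfs
    refine ⟨hsD, ?_⟩
    rw [hcoe s hsD] at hfs
    have := EReal.coe_le_coe_iff.mp hfs
    simp only [hgg]
    linarith
  constructor
  · intro u
    obtain ⟨s, hsD, hsmin⟩ :=
      exists_min_aux α hα D x₀ hx₀D (gg u) (hcombo u) (hbdd u) (hcl u)
    refine ⟨s, (hmin_iff u s).mpr ⟨hsD, hsmin⟩, ?_⟩
    intro t ht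
    obtain ⟨htD, htmin⟩ := (hmin_iff u t).mp ht
    have h1 := growth_aux α D (gg u) (hcombo u) s hsD hsmin t htD
    have h2 := htmin s hsD
    have h3 : α / 2 * ‖t - s‖ ^ 2 ≤ 0 := by
      have h12 := h1.trans h2
      linarith [h12]
    have hX : ‖t - s‖ ^ 2 ≤ 0 := by nlinarith [h3, hα]
    have h5 : ‖t - s‖ ^ 2 = 0 := le_antisymm hX (sq_nonneg _)
    have h6 : ‖t - s‖ = 0 := by
      have := sq_eq_zero_iff.mp h5
      simpa using this
    exact sub_eq_zero.mp (norm_eq_zero.mp h6)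
  · intro u v su sv hsu hsv
    obtain ⟨huD, humin⟩ := (hmin_iff u su).mp hsu
    obtain ⟨hvD, hvmin⟩ := (hmin_iff v sv).mp hsv
    have g1 := growth_aux α D (gg u) (hcombo u) su huD humin sv hvD
    have g2 := growth_aux α D (gg v) (hcombo v) sv hvD hvmin su huD
    have d1 := qf_diff A M c u v sv
    have d2 := qf_diff A M c u v su
    have hns : ‖sv - su‖ = ‖su - sv‖ := norm_sub_rev _ _
    have e1 : ⟪sv - su, v - u⟫ = ⟪sv, v - u⟫ - ⟪su, v - u⟫ := inner_sub_left _ _ _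
    simp only [hgg] at g1 g2
    rw [hns] at g1
    have key : α * ‖su - sv‖ ^ 2 ≤ c * ⟪sv - su, v - u⟫ := by
      rw [e1]; linarith
    have cs : ⟪sv - su, v - u⟫ ≤ ‖sv - su‖ * ‖v - u‖ := real_inner_le_norm _ _
    have hvu : ‖v - u‖ = ‖u - v‖ := norm_sub_rev _ _
    have cs' : ⟪sv - su, v - u⟫ ≤ ‖su - sv‖ * ‖u - v‖ := by
      rw [← hns, ← hvu]
      exact cs
    have h3 : α * ‖su - sv‖ ^ 2 ≤ c * (‖su - sv‖ * ‖u - v‖) :=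
      key.trans (mul_le_mul_of_nonneg_left cs' hc.le)
    rcases eq_or_lt_of_le (norm_nonneg (su - sv)) with h0 | h0
    · rw [← h0]; positivity
    · rw [div_mul_eq_mul_div, le_div_iff₀ hα]
      nlinarith [h3, h0]
end

section
/- Let H, G be real Hilbert spaces, f : H → (-∞,+∞] proper, convex, lower semicontinuous, A : H → G continuous linear, h : H → ℝ convex Fréchet differentiable, c > 0, and for each t ≥ 0 let M₁(t) ∈ S₊(H) with cA*A + M₁(t) ⪰ α(t)I for some α(t) > 0. Fix (x, z, y) ∈ H × G × G and define R(t) as the unique solution of the strongly monotone inclusion M₁(t)x + cA*z − A*y − ∇h(x) ∈ ∂f(R(t) + x) + (cA*A + M₁(t))(R(t) + x). Then for all t, r ≥ 0: ‖R(t) − R(r)‖ ≤ (‖R(r)‖ / α(t)) · ‖M₁(t) − M₁(r)‖. -/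
/-!
Monotonicity of the subdifferential tested at `R t + x` and `R r + x` gives
`0 ≤ ⟪B_r (R r) - B_t (R t), R t - R r⟫` with `B_s = c A*A + M₁ s`, because the inclusion reads
`d - B_s (R s) ∈ ∂f (R s + x)` for a vector `d` independent of `s`. Splitting
`B_t (R t) - B_r (R r) = B_t (R t - R r) + (M₁ t - M₁ r) (R r)`, the α(t)-coercivity of `B_t` and
Cauchy–Schwarz give `α(t) ‖R t - R r‖² ≤ ‖M₁ t - M₁ r‖ ‖R r‖ ‖R t - R r‖`.
-/

open scoped RealInnerProductSpace
open ContinuousLinearMap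

section Subdiff

variable {H : Type*} [NormedAddCommGroup H] [InnerProductSpace ℝ H] {f : H → EReal}

lemma ne_top_of_mem_subdiff {u p : H} (hu : u ∈ subdiff f p) (hf : ∃ x, f x ≠ ⊤) :
    f p ≠ ⊤ := by
  obtain ⟨x₀, hx₀⟩ := hf
  intro hp
  have := hu x₀
  rw [hp, EReal.top_add_coe, top_le_iff] at this
  exact hx₀ this

lemma inner_sub_sub_nonneg_of_mem_subdiff (hf : (∃ x, f x ≠ ⊤) ∧ ∀ x, f x ≠ ⊥) {u v p q : H}
    (hu : u ∈ subdiff f p) (hv : v ∈ subdiff f q) : 0 ≤ ⟪u - v, p - q⟫ := by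
  have hfp := (EReal.coe_toReal (ne_top_of_mem_subdiff hu hf.1) (hf.2 p)).symm
  have hfq := (EReal.coe_toReal (ne_top_of_mem_subdiff hv hf.1) (hf.2 q)).symm
  have hpq := hu q
  have hqp := hv p
  rw [hfp, hfq, ← EReal.coe_add, EReal.coe_le_coe_iff] at hpq hqp
  rw [← neg_sub p q, inner_neg_right] at hpq
  rw [inner_sub_left]
  linarith

end Subdiff

section StronglyMonotone

variable {H : Type*} [NormedAddCommGroup H] [InnerProductSpace ℝ H]

lemma norm_sub_le_of_inner_nonneg_of_coercive {B B' : H →L[ℝ] H} {α : ℝ} (hα : 0 < α)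
    (hB : ∀ w, α * ‖w‖ ^ 2 ≤ ⟪B w, w⟫) {p q : H} (hpq : 0 ≤ ⟪B' q - B p, p - q⟫) :
    ‖p - q‖ ≤ ‖q‖ / α * ‖B - B'‖ := by
  set w := p - q with hw
  have hsplit : B' q - B p = -B w - (B - B') q := by
    simp only [hw, map_sub, sub_apply]
    abel
  have hbound : α * ‖w‖ ^ 2 ≤ ‖B - B'‖ * ‖q‖ * ‖w‖ :=
    calc α * ‖w‖ ^ 2 ≤ ⟪B w, w⟫ := hB w
      _ ≤ -⟪(B - B') q, w⟫ := by
        rw [hsplit, inner_sub_left, inner_neg_left] at hpq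
        linarith
      _ ≤ ‖(B - B') q‖ * ‖w‖ := (neg_le_abs _).trans (abs_real_inner_le_norm _ _)
      _ ≤ ‖B - B'‖ * ‖q‖ * ‖w‖ := by gcongr; exact (B - B').le_opNorm q
  rw [div_mul_eq_mul_div, le_div_iff₀ hα]
  rcases (norm_nonneg w).eq_or_lt with hw0 | hw0
  · rw [← hw0, zero_mul]
    positivity
  · nlinarith

end StronglyMonotone

theorem stmt2_general {H G : Type*} [NormedAddCommGroup H] [InnerProductSpace ℝ H] [CompleteSpace H]
    [NormedAddCommGroup G] [InnerProductSpace ℝ G] [CompleteSpace G]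
    (f : H → EReal)
    (hproper : (∃ x, f x ≠ ⊤) ∧ ∀ x, f x ≠ ⊥)
    (A : H →L[ℝ] G)
    (h' : H → H)
    (c : ℝ)
    (M₁ : ℝ → H →L[ℝ] H)
    (α : ℝ → ℝ) (hα : ∀ t, 0 ≤ t → 0 < α t)
    (hstrong : ∀ t, 0 ≤ t → ∀ w : H, α t * ‖w‖ ^ 2 ≤ c * ‖A w‖ ^ 2 + ⟪M₁ t w, w⟫)
    (x : H) (z y : G)
    (R : ℝ → H)
    (hR : ∀ t, 0 ≤ t →
      M₁ t x + c • (adjoint A) z - (adjoint A) y - h' x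
        - (c • (adjoint A) (A (R t + x)) + M₁ t (R t + x)) ∈ subdiff f (R t + x)) :
    ∀ t r, 0 ≤ t → 0 ≤ r →
      ‖R t - R r‖ ≤ (‖R r‖ / α t) * ‖M₁ t - M₁ r‖ := by
  intro t r ht hr
  set B : ℝ → H →L[ℝ] H := fun s ↦ c • (adjoint A ∘L A) + M₁ s with hB
  have hcoercive : ∀ w, α t * ‖w‖ ^ 2 ≤ ⟪B t w, w⟫ := fun w ↦ by
    simpa [hB, inner_add_left, real_inner_smul_left, adjoint_inner_left,
      real_inner_self_eq_norm_sq] using hstrong t ht w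
  have hlhs : ∀ s, M₁ s x + c • (adjoint A) z - (adjoint A) y - h' x
      - (c • (adjoint A) (A (R s + x)) + M₁ s (R s + x))
      = (c • (adjoint A) z - (adjoint A) y - h' x - c • (adjoint A) (A x)) - B s (R s) := by
    intro s
    simp only [hB, add_apply, smul_apply, comp_apply, map_add, smul_add]
    abel
  have hmono := inner_sub_sub_nonneg_of_mem_subdiff hproper (hR t ht) (hR r hr)
  rw [hlhs, hlhs, sub_sub_sub_cancel_left, add_sub_add_right_eq_sub] at hmono
  simpa [hB] using norm_sub_le_of_inner_nonneg_of_coercive (hα t ht) hcoercive hmono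

theorem stmt2 {H G : Type*} [NormedAddCommGroup H] [InnerProductSpace ℝ H] [CompleteSpace H]
    [NormedAddCommGroup G] [InnerProductSpace ℝ G] [CompleteSpace G]
    (f : H → EReal)
    (hproper : (∃ x, f x ≠ ⊤) ∧ ∀ x, f x ≠ ⊥)
    (hconv : ∀ x y : H, ∀ a b : ℝ, 0 ≤ a → 0 ≤ b → a + b = 1 →
      f (a • x + b • y) ≤ (a : EReal) * f x + (b : EReal) * f y)
    (hlsc : LowerSemicontinuous f)
    (A : H →L[ℝ] G)
    (h : H → ℝ) (h' : H → H) (hhconv : ConvexOn ℝ Set.univ h)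
    (hgrad : ∀ x : H, HasGradientAt h (h' x) x)
    (c : ℝ) (hc : 0 < c)
    (M₁ : ℝ → H →L[ℝ] H)
    (hM₁sym : ∀ t, 0 ≤ t → ∀ u v : H, ⟪M₁ t u, v⟫ = ⟪u, M₁ t v⟫)
    (hM₁pos : ∀ t, 0 ≤ t → ∀ u : H, 0 ≤ ⟪M₁ t u, u⟫)
    (α : ℝ → ℝ) (hα : ∀ t, 0 ≤ t → 0 < α t)
    (hstrong : ∀ t, 0 ≤ t → ∀ w : H, α t * ‖w‖ ^ 2 ≤ c * ‖A w‖ ^ 2 + ⟪M₁ t w, w⟫)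
    (x : H) (z y : G)
    (R : ℝ → H)
    (hR : ∀ t, 0 ≤ t →
      M₁ t x + c • (adjoint A) z - (adjoint A) y - h' x
        - (c • (adjoint A) (A (R t + x)) + M₁ t (R t + x)) ∈ subdiff f (R t + x)) :
    ∀ t r, 0 ≤ t → 0 ≤ r →
      ‖R t - R r‖ ≤ (‖R r‖ / α t) * ‖M₁ t - M₁ r‖ :=
  stmt2_general f hproper A h' c M₁ α hα hstrong x z y R hR
end

section
/- (Opial lemma with variable metrics, continuous version.) Let H be a real Hilbert space, C ⊆ H a nonempty set, x : [0,+∞) → H a continuous map, and M : [0,+∞) → S₊(H) monotonically decreasing with M(t) ⪰ αI for all t ≥ 0 and some α > 0. Assume (i) for every z ∈ C the limit lim_{t→+∞} ‖x(t) − z‖_{M(t)} exists, and (ii) every weak sequential cluster point of the trajectory x(t) as t → +∞ belongs to C. Then there exists x∞ ∈ C such that x(t) converges weakly to x∞ as t → +∞. -/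
open scoped RealInnerProductSpace
open Set Filter

section aux
variable {H : Type*} [NormedAddCommGroup H] [InnerProductSpace ℝ H]

lemma psd_cs {T : H →L[ℝ] H} (hs : ∀ u v : H, ⟪T u, v⟫ = ⟪u, T v⟫)
    (hp : ∀ v : H, 0 ≤ ⟪v, T v⟫) (u v : H) :
    ⟪u, T v⟫ ^ 2 ≤ ⟪u, T u⟫ * ⟪v, T v⟫ := by
  have key : ∀ lam : ℝ, 0 ≤ ⟪v, T v⟫ * (lam * lam) + (2 * ⟪u, T v⟫) * lam + ⟪u, T u⟫ := by
    intro lam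
    have h0 := hp (u + lam • v)
    have h1 : (⟪v, T u⟫ : ℝ) = ⟪u, T v⟫ := by
      rw [← hs u v]; exact real_inner_comm _ _
    simp only [map_add, map_smul, inner_add_left, inner_add_right, real_inner_smul_left,
      real_inner_smul_right, h1] at h0
    nlinarith [h0]
  have hd := discrim_le_zero key
  rw [discrim] at hd
  nlinarith [hd]

lemma exists_weak_subseq [CompleteSpace H] (y : ℕ → H) (R : ℝ) (hy : ∀ n, ‖y n‖ ≤ R) :
    ∃ p : H, ∃ φ : ℕ → ℕ, StrictMono φ ∧
      ∀ w : H, Tendsto (fun n => (⟪y (φ n), w⟫ : ℝ)) atTop (nhds ⟪p, w⟫) := by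
  classical
  have hR0 : 0 ≤ R := (norm_nonneg _).trans (hy 0)
  set K : Submodule ℝ H := (Submodule.span ℝ (Set.range y)).topologicalClosure with hK
  have hKcl : IsClosed (K : Set H) := by
    rw [hK]; exact Submodule.isClosed_topologicalClosure _
  haveI : CompleteSpace K := hKcl.completeSpace_coe
  have hKsep : TopologicalSpace.IsSeparable (K : Set H) :=
    ((countable_range y).isSeparable.span).closure
  obtain ⟨c, hc_count, hcK⟩ := hKsep
  obtain ⟨s, hs⟩ : ∃ s : ℕ → H, insert (0:H) c = Set.range s :=
    Set.Countable.exists_eq_range (hc_count.insert 0) (insert_nonempty _ _)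
  have hcs : c ⊆ Set.range s := hs ▸ subset_insert _ _
  -- Tychonoff extraction
  set F : ℕ → ℕ → ℝ := fun n k => ⟪y n, s k⟫ with hF
  have hFmem : ∀ n, F n ∈ Set.pi univ (fun k => Icc (-(R*‖s k‖)) (R*‖s k‖)) := by
    intro n k _
    have h1 : |(⟪y n, s k⟫ : ℝ)| ≤ ‖y n‖ * ‖s k‖ := abs_real_inner_le_norm _ _
    have h2 : ‖y n‖ * ‖s k‖ ≤ R * ‖s k‖ :=
      mul_le_mul_of_nonneg_right (hy n) (norm_nonneg _)
    constructor <;> [linarith [abs_le.mp (h1.trans h2)]; exact (abs_le.mp (h1.trans h2)).2]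
  obtain ⟨g, -, φ, hφ, hconv⟩ :=
    (isCompact_univ_pi (fun k => isCompact_Icc)).tendsto_subseq hFmem
  have hpt : ∀ k, Tendsto (fun n => (⟪y (φ n), s k⟫ : ℝ)) atTop (nhds (g k)) := by
    intro k
    exact (tendsto_pi_nhds.1 hconv) k
  -- Cauchy for w in closure of range s
  have hcau : ∀ w ∈ closure (Set.range s), CauchySeq (fun n => (⟪y (φ n), w⟫ : ℝ)) := by
    intro w hw
    rw [Metric.cauchySeq_iff]
    intro ε hε
    obtain ⟨v, hv, hvw⟩ := Metric.mem_closure_iff.1 hw (ε/(4*(R+1))) (by positivity)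
    obtain ⟨k, rfl⟩ := hv
    obtain ⟨N, hN⟩ := Metric.cauchySeq_iff.1 (hpt k).cauchySeq (ε/2) (by positivity)
    refine ⟨N, fun m hm n hn => ?_⟩
    have hb : ∀ j : ℕ, |(⟪y (φ j), w - s k⟫ : ℝ)| ≤ R * ‖w - s k‖ :=
      fun j => (abs_real_inner_le_norm _ _).trans
        (mul_le_mul_of_nonneg_right (hy _) (norm_nonneg _))
    have hws : ‖w - s k‖ < ε/(4*(R+1)) := by rwa [dist_eq_norm] at hvw
    have hRw : R * ‖w - s k‖ ≤ (R+1) * (ε/(4*(R+1))) := by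
      have := mul_le_mul (le_add_of_nonneg_right (zero_le_one)) hws.le (norm_nonneg _)
        (by positivity : (0:ℝ) ≤ R + 1)
      linarith
    have hRe : (R+1) * (ε/(4*(R+1))) = ε/4 := by field_simp
    have hmn := hN m hm n hn
    have e1 : (⟪y (φ m), w⟫ : ℝ) = ⟪y (φ m), s k⟫ + ⟪y (φ m), w - s k⟫ := by
      rw [inner_sub_right]; ring
    have e2 : (⟪y (φ n), w⟫ : ℝ) = ⟪y (φ n), s k⟫ + ⟪y (φ n), w - s k⟫ := by
      rw [inner_sub_right]; ring
    rw [Real.dist_eq] at hmn ⊢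
    rw [e1, e2]
    have b1 := hb m; have b2 := hb n
    rw [hRe] at hRw
    have := abs_sub_abs_le_abs_sub (⟪y (φ m), w - s k⟫ : ℝ) (⟪y (φ n), w - s k⟫ : ℝ)
    calc |(⟪y (φ m), s k⟫ + ⟪y (φ m), w - s k⟫) - (⟪y (φ n), s k⟫ + ⟪y (φ n), w - s k⟫)|
        ≤ |(⟪y (φ m), s k⟫ : ℝ) - ⟪y (φ n), s k⟫| + |(⟪y (φ m), w - s k⟫:ℝ)| + |(⟪y (φ n), w - s k⟫:ℝ)| := by
          have := abs_sub_abs_le_abs_sub ((⟪y (φ m), s k⟫:ℝ)) ((⟪y (φ n), s k⟫:ℝ))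
          have h3 := abs_add_le ((⟪y (φ m), s k⟫:ℝ) - ⟪y (φ n), s k⟫)
            ((⟪y (φ m), w - s k⟫:ℝ) - ⟪y (φ n), w - s k⟫)
          have h4 := abs_sub ((⟪y (φ m), w - s k⟫:ℝ)) ((⟪y (φ n), w - s k⟫:ℝ))
          have h5 : (⟪y (φ m), s k⟫ + ⟪y (φ m), w - s k⟫) - (⟪y (φ n), s k⟫ + ⟪y (φ n), w - s k⟫)
            = ((⟪y (φ m), s k⟫:ℝ) - ⟪y (φ n), s k⟫) + (((⟪y (φ m), w - s k⟫:ℝ)) - ⟪y (φ n), w - s k⟫) := by ring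
          rw [h5]
          linarith
      _ < ε := by linarith
  -- Cauchy for all w via orthogonal projection
  have hcau' : ∀ w : H, CauchySeq (fun n => (⟪y (φ n), w⟫ : ℝ)) := by
    intro w
    have hyK : ∀ n, y n ∈ K :=
      fun n => Submodule.le_topologicalClosure _ (Submodule.subset_span (mem_range_self n))
    have hPw : ((K.orthogonalProjectionOnto w : K) : H) ∈ closure (Set.range s) := by
      have h1 : ((K.orthogonalProjectionOnto w : K) : H) ∈ (K : Set H) := SetLike.coe_mem _
      exact closure_mono hcs (hcK h1)
    have heq : ∀ n, (⟪y (φ n), w⟫ : ℝ) = ⟪y (φ n), ((K.orthogonalProjectionOnto w : K) : H)⟫ := by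
      intro n
      have horth : w - ((K.orthogonalProjectionOnto w : K) : H) ∈ Kᗮ :=
        Submodule.sub_starProjection_mem_orthogonal (K := K) w
      have h0 : (⟪y (φ n), w - ((K.orthogonalProjectionOnto w : K) : H)⟫ : ℝ) = 0 :=
        (Submodule.mem_orthogonal K _).1 horth _ (hyK _)
      have := inner_sub_right (𝕜 := ℝ) (y (φ n)) w ((K.orthogonalProjectionOnto w : K) : H)
      rw [this] at h0
      linarith
    simp only [heq]
    exact hcau _ hPw
  have hlim : ∀ w : H, ∃ r : ℝ, Tendsto (fun n => (⟪y (φ n), w⟫ : ℝ)) atTop (nhds r) :=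
    fun w => cauchySeq_tendsto_of_complete (hcau' w)
  choose L hL using hlim
  -- L is linear and bounded
  have hadd : ∀ w₁ w₂ : H, L (w₁ + w₂) = L w₁ + L w₂ := by
    intro w₁ w₂
    refine tendsto_nhds_unique (hL (w₁ + w₂)) ?_
    have := (hL w₁).add (hL w₂)
    refine this.congr fun n => ?_
    rw [inner_add_right]
  have hsmul : ∀ (a : ℝ) (w : H), L (a • w) = a * L w := by
    intro a w
    refine tendsto_nhds_unique (hL (a • w)) ?_
    have := (hL w).const_mul a
    refine this.congr fun n => ?_
    rw [real_inner_smul_right]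
  have hbound : ∀ w : H, ‖L w‖ ≤ R * ‖w‖ := by
    intro w
    have h1 : Tendsto (fun n => |(⟪y (φ n), w⟫ : ℝ)|) atTop (nhds |L w|) := (hL w).abs
    have h2 : ∀ n, |(⟪y (φ n), w⟫ : ℝ)| ≤ R * ‖w‖ :=
      fun n => (abs_real_inner_le_norm _ _).trans
        (mul_le_mul_of_nonneg_right (hy _) (norm_nonneg _))
    simpa [Real.norm_eq_abs] using le_of_tendsto h1 (Eventually.of_forall h2)
  let ℓ : H →L[ℝ] ℝ := LinearMap.mkContinuous
    { toFun := L, map_add' := hadd, map_smul' := hsmul } R hbound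
  refine ⟨(InnerProductSpace.toDual ℝ H).symm ℓ, φ, hφ, fun w => ?_⟩
  have : (⟪(InnerProductSpace.toDual ℝ H).symm ℓ, w⟫ : ℝ) = ℓ w :=
    InnerProductSpace.toDual_symm_apply
  rw [this]
  exact hL w


end aux

set_option maxHeartbeats 1000000 in
theorem stmt10 {H : Type*} [NormedAddCommGroup H] [InnerProductSpace ℝ H] [CompleteSpace H]
    (C : Set H) (hC : C.Nonempty)
    (x : ℝ → H) (hx : ContinuousOn x (Ici 0))
    (M : ℝ → H →L[ℝ] H)
    (hsym : ∀ t, 0 ≤ t → ∀ u v : H, ⟪M t u, v⟫ = ⟪u, M t v⟫)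
    (hdec : ∀ t₁ t₂, 0 ≤ t₁ → t₁ ≤ t₂ → ∀ v : H, ⟪v, M t₂ v⟫ ≤ ⟪v, M t₁ v⟫)
    (α : ℝ) (hα : 0 < α)
    (hcoerc : ∀ t, 0 ≤ t → ∀ v : H, α * ‖v‖ ^ 2 ≤ ⟪v, M t v⟫)
    (hi : ∀ z ∈ C, ∃ l : ℝ,
      Tendsto (fun t => Real.sqrt ⟪x t - z, M t (x t - z)⟫) atTop (nhds l))
    (hii : ∀ p : H,
      (∃ u : ℕ → ℝ, Tendsto u atTop atTop ∧
        ∀ w : H, Tendsto (fun n => (⟪x (u n), w⟫ : ℝ)) atTop (nhds ⟪p, w⟫)) → p ∈ C) :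
    ∃ xinf ∈ C, ∀ w : H, Tendsto (fun t => (⟪x t, w⟫ : ℝ)) atTop (nhds ⟪xinf, w⟫) := by
  classical
  obtain ⟨z₀, hz₀⟩ := hC
  set N : ℝ → H →L[ℝ] H := fun t => M (max t 0) with hN
  have hNsym : ∀ (t : ℝ) (u v : H), (⟪N t u, v⟫ : ℝ) = ⟪u, N t v⟫ :=
    fun t u v => hsym _ (le_max_right _ _) u v
  have hNdec : ∀ t₁ t₂ : ℝ, t₁ ≤ t₂ → ∀ v : H, (⟪v, N t₂ v⟫ : ℝ) ≤ ⟪v, N t₁ v⟫ :=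
    fun t₁ t₂ h v => hdec _ _ (le_max_right _ _) (max_le_max h le_rfl) v
  have hNco : ∀ (t : ℝ) (v : H), α * ‖v‖ ^ 2 ≤ ⟪v, N t v⟫ :=
    fun t v => hcoerc _ (le_max_right _ _) v
  have hNpos : ∀ (t : ℝ) (v : H), (0:ℝ) ≤ ⟪v, N t v⟫ :=
    fun t v => le_trans (by positivity) (hNco t v)
  have hNeq : ∀ t : ℝ, 0 ≤ t → N t = M t := by
    intro t ht; rw [hN]; simp [max_eq_left ht]
  -- (b) limits of quadratic forms
  have hquad : ∀ v : H, ∃ r : ℝ, Tendsto (fun t => (⟪v, N t v⟫ : ℝ)) atTop (nhds r) := by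
    intro v
    have hanti : Antitone (fun t => (⟪v, N t v⟫ : ℝ)) := fun a b hab => hNdec a b hab v
    have hbdd : BddBelow (Set.range fun t => (⟪v, N t v⟫ : ℝ)) :=
      ⟨0, by rintro r ⟨t, rfl⟩; exact hNpos t v⟩
    exact ⟨_, tendsto_atTop_ciInf hanti hbdd⟩
  -- (c) uniform bound on operators
  have hNle0 : ∀ (t : ℝ) (v : H), (⟪v, N t v⟫ : ℝ) ≤ ⟪v, N 0 v⟫ := by
    intro t v
    have := hNdec (min t 0) t (min_le_left _ _) v
    refine this.trans ?_
    have h0 : N (min t 0) = N 0 := by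
      rw [hN]; simp
    rw [h0]
  have hbnd : ∀ (t : ℝ) (v : H), ‖N t v‖ ≤ ‖N 0‖ * ‖v‖ := by
    intro t v
    have key : ∀ u : H, (⟪u, N t v⟫ : ℝ)^2 ≤ (‖N 0‖ * ‖u‖^2) * (‖N 0‖ * ‖v‖^2) := by
      intro u
      have hcs := psd_cs (hNsym t) (hNpos t) u v
      have hq : ∀ w : H, (⟪w, N t w⟫ : ℝ) ≤ ‖N 0‖ * ‖w‖^2 := by
        intro w
        refine (hNle0 t w).trans ?_
        calc (⟪w, N 0 w⟫ : ℝ) ≤ ‖w‖ * ‖N 0 w‖ := real_inner_le_norm _ _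
          _ ≤ ‖w‖ * (‖N 0‖ * ‖w‖) := by
              exact mul_le_mul_of_nonneg_left ((N 0).le_opNorm w) (norm_nonneg _)
          _ = ‖N 0‖ * ‖w‖^2 := by ring
      have h1 := hq u; have h2 := hq v
      have hpu := hNpos t u; have hpv := hNpos t v
      nlinarith [hcs]
    have hkey := key (N t v)
    rw [real_inner_self_eq_norm_sq] at hkey
    have hbc : (0:ℝ) ≤ ‖N 0‖ * ‖v‖ := by positivity
    rcases eq_or_lt_of_le (norm_nonneg (N t v)) with h0 | h0
    · rw [← h0]; positivity
    · have ha2 : (0:ℝ) < ‖N t v‖^2 := by positivity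
      have h8 : ‖N t v‖^2 ≤ (‖N 0‖ * ‖v‖)^2 := by
        by_contra hcon
        push_neg at hcon
        have := mul_lt_mul_of_pos_right hcon ha2
        nlinarith [hkey]
      calc ‖N t v‖ = Real.sqrt (‖N t v‖^2) := (Real.sqrt_sq (norm_nonneg _)).symm
        _ ≤ Real.sqrt ((‖N 0‖*‖v‖)^2) := Real.sqrt_le_sqrt h8
        _ = ‖N 0‖*‖v‖ := Real.sqrt_sq hbc
  -- (d) strong convergence of N t
  have hDiff : ∀ a b : ℝ, a ≤ b → ∀ v : H,
      ‖N a v - N b v‖^2 ≤ (2*‖N 0‖) * ((⟪v, N a v⟫ : ℝ) - ⟪v, N b v⟫) := by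
    intro a b hab v
    set T : H →L[ℝ] H := N a - N b with hT
    have hTapp : ∀ w : H, T w = N a w - N b w := fun w => rfl
    have hTsym : ∀ u w : H, (⟪T u, w⟫ : ℝ) = ⟪u, T w⟫ := by
      intro u w
      simp only [hTapp, inner_sub_left, inner_sub_right, hNsym]
    have hTpos : ∀ w : H, (0:ℝ) ≤ ⟪w, T w⟫ := by
      intro w
      have := hNdec a b hab w
      simp only [hTapp, inner_sub_right]
      linarith
    have hcs := psd_cs hTsym hTpos (T v) v
    have hTvv : (⟪T v, T v⟫ : ℝ) = ‖T v‖^2 := real_inner_self_eq_norm_sq _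
    have hTn : ∀ w : H, ‖T w‖ ≤ (2*‖N 0‖) * ‖w‖ := by
      intro w
      calc ‖T w‖ = ‖N a w - N b w‖ := by rw [hTapp]
        _ ≤ ‖N a w‖ + ‖N b w‖ := norm_sub_le _ _
        _ ≤ ‖N 0‖ * ‖w‖ + ‖N 0‖ * ‖w‖ := add_le_add (hbnd a w) (hbnd b w)
        _ = (2*‖N 0‖) * ‖w‖ := by ring
    have h2 : (⟪T v, T (T v)⟫ : ℝ) ≤ ‖T v‖ * ((2*‖N 0‖) * ‖T v‖) := by
      calc (⟪T v, T (T v)⟫ : ℝ) ≤ ‖T v‖ * ‖T (T v)‖ := real_inner_le_norm _ _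
        _ ≤ ‖T v‖ * ((2*‖N 0‖) * ‖T v‖) :=
            mul_le_mul_of_nonneg_left (hTn (T v)) (norm_nonneg _)
    have hgoal : ‖T v‖^2 ≤ (2*‖N 0‖) * (⟪v, T v⟫ : ℝ) := by
      have hq0 : (0:ℝ) ≤ ⟪v, T v⟫ := hTpos v
      rcases eq_or_lt_of_le (norm_nonneg (T v)) with h0 | h0
      · rw [← h0]
        nlinarith [norm_nonneg (N 0)]
      · have h2' : (⟪T v, T (T v)⟫ : ℝ) ≤ 2*‖N 0‖ * ‖T v‖^2 := by nlinarith [h2]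
        have h3 := mul_le_mul_of_nonneg_right h2' hq0
        have h4 : (‖T v‖^2)^2 ≤ (2*‖N 0‖ * (⟪v, T v⟫ : ℝ)) * ‖T v‖^2 := by nlinarith [hcs, hTvv, h3]
        by_contra hcon
        push_neg at hcon
        have := mul_lt_mul_of_pos_right hcon (by positivity : (0:ℝ) < ‖T v‖^2)
        nlinarith [h4]
    have hTveq : T v = N a v - N b v := hTapp v
    have hip : (⟪v, T v⟫ : ℝ) = ⟪v, N a v⟫ - ⟪v, N b v⟫ := by
      rw [hTveq, inner_sub_right]
    have hfin : ‖N a v - N b v‖^2 ≤ (2*‖N 0‖) * (⟪v, T v⟫ : ℝ) := by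
      rw [← hTveq]; exact hgoal
    rwa [hip] at hfin
  have hScex : ∀ v : H, ∃ Sv : H, Tendsto (fun t => N t v) atTop (nhds Sv) := by
    intro v
    obtain ⟨r, hr⟩ := hquad v
    apply cauchySeq_tendsto_of_complete
    rw [Metric.cauchySeq_iff]
    intro ε hε
    have hK1 : (0:ℝ) < 2*‖N 0‖ + 1 := by positivity
    have hδ : (0:ℝ) < ε^2/(4*(2*‖N 0‖ + 1)) := by positivity
    obtain ⟨T₁, hT₁⟩ := (Metric.tendsto_atTop.mp hr) _ hδ
    have main : ∀ a b : ℝ, T₁ ≤ a → T₁ ≤ b → a ≤ b → dist (N a v) (N b v) < ε := by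
      intro a b ha hb hab
      have h1 := hDiff a b hab v
      have h2 := hT₁ a ha
      have h3 := hT₁ b hb
      rw [Real.dist_eq] at h2 h3
      have h4 : (⟪v, N a v⟫ : ℝ) - ⟪v, N b v⟫ < 2 * (ε^2/(4*(2*‖N 0‖ + 1))) := by
        have := abs_lt.mp h2; have := abs_lt.mp h3; linarith [abs_lt.mp h2, abs_lt.mp h3]
      have h5 : ‖N a v - N b v‖^2 < ε^2 := by
        have hn0 : (0:ℝ) ≤ 2*‖N 0‖ := by positivity
        have h6 : (2*‖N 0‖) * ((⟪v, N a v⟫ : ℝ) - ⟪v, N b v⟫)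
            ≤ (2*‖N 0‖ + 1) * (2 * (ε^2/(4*(2*‖N 0‖ + 1)))) := by
          have hg : (0:ℝ) ≤ (⟪v, N a v⟫ : ℝ) - ⟪v, N b v⟫ := by
            have := hNdec a b hab v; linarith
          nlinarith
        have h7 : (2*‖N 0‖ + 1) * (2 * (ε^2/(4*(2*‖N 0‖ + 1)))) = ε^2/2 := by
          field_simp; ring
        nlinarith
      rw [dist_eq_norm]
      exact lt_of_pow_lt_pow_left₀ 2 hε.le (by simpa using h5)
    refine ⟨T₁, fun a ha b hb => ?_⟩
    rcases le_total a b with h | h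
    · exact main a b ha hb h
    · rw [dist_comm]; exact main b a hb ha h
  choose S hS using hScex
  have hSinner : ∀ u v : H, Tendsto (fun t => (⟪u, N t v⟫ : ℝ)) atTop (nhds (⟪u, S v⟫ : ℝ)) :=
    fun u v => (tendsto_const_nhds : Tendsto (fun _ : ℝ => u) atTop (nhds u)).inner (hS v)
  have hSco : ∀ v : H, α * ‖v‖^2 ≤ (⟪v, S v⟫ : ℝ) :=
    fun v => ge_of_tendsto (hSinner v v) (Eventually.of_forall fun t => hNco t v)
  -- (e) eventual bound on the trajectory
  obtain ⟨l₀, hl₀⟩ := hi z₀ hz₀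
  obtain ⟨T₀, R, hT₀, hR⟩ :
      ∃ T₀ R : ℝ, 0 ≤ T₀ ∧ ∀ t, T₀ ≤ t → ‖x t‖ ≤ R := by
    have h1 : ∀ᶠ t in atTop, Real.sqrt (⟪x t - z₀, M t (x t - z₀)⟫ : ℝ) < l₀ + 1 :=
      hl₀.eventually_lt_const (lt_add_one l₀)
    obtain ⟨T, hT⟩ := eventually_atTop.mp (h1.and (eventually_ge_atTop (0:ℝ)))
    refine ⟨max T 0, ‖z₀‖ + Real.sqrt ((l₀+1)^2/α), le_max_right _ _, fun t ht => ?_⟩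
    obtain ⟨h2, h3⟩ := hT t ((le_max_left _ _).trans ht)
    have hq0 : (0:ℝ) ≤ ⟪x t - z₀, M t (x t - z₀)⟫ :=
      le_trans (by positivity) (hcoerc t h3 _)
    have h4 : (⟪x t - z₀, M t (x t - z₀)⟫ : ℝ) ≤ (l₀+1)^2 := by
      have hs := Real.sq_sqrt hq0
      have hnn := Real.sqrt_nonneg (⟪x t - z₀, M t (x t - z₀)⟫ : ℝ)
      nlinarith
    have h5 : α * ‖x t - z₀‖^2 ≤ (l₀+1)^2 := le_trans (hcoerc t h3 _) h4
    have h6 : ‖x t - z₀‖^2 ≤ (l₀+1)^2/α := (le_div_iff₀' hα).mpr h5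
    have h7 : ‖x t - z₀‖ ≤ Real.sqrt ((l₀+1)^2/α) := by
      rw [← Real.sqrt_sq (norm_nonneg (x t - z₀))]
      exact Real.sqrt_le_sqrt h6
    calc ‖x t‖ = ‖z₀ + (x t - z₀)‖ := by congr 1; abel
      _ ≤ ‖z₀‖ + ‖x t - z₀‖ := norm_add_le _ _
      _ ≤ ‖z₀‖ + Real.sqrt ((l₀+1)^2/α) := by linarith
  -- (f) limits of h z t
  have hform : ∀ z ∈ C, ∃ r : ℝ,
      Tendsto (fun t => (⟪x t - z, N t (x t - z)⟫ : ℝ)) atTop (nhds r) := by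
    intro z hz
    obtain ⟨l, hl⟩ := hi z hz
    refine ⟨l^2, ?_⟩
    have h1 : Tendsto (fun t => (Real.sqrt (⟪x t - z, M t (x t - z)⟫ : ℝ))^2) atTop
        (nhds (l^2)) := hl.pow 2
    refine h1.congr' ?_
    filter_upwards [eventually_ge_atTop (0:ℝ)] with t ht
    rw [Real.sq_sqrt (le_trans (by positivity) (hcoerc t ht _)), hNeq t ht]
  -- (g) cross-term limit
  have hcross : ∀ p ∈ C, ∀ q ∈ C, ∃ cpq : ℝ,
      Tendsto (fun t => (⟪x t, N t (p - q)⟫ : ℝ)) atTop (nhds cpq) := by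
    intro p hp q hq
    obtain ⟨rp, hrp⟩ := hform p hp
    obtain ⟨rq, hrq⟩ := hform q hq
    have hexp : ∀ (t : ℝ) (z : H), (⟪x t - z, N t (x t - z)⟫ : ℝ)
        = ⟪x t, N t (x t)⟫ - 2*⟪x t, N t z⟫ + ⟪z, N t z⟫ := by
      intro t z
      have h1 : (⟪z, N t (x t)⟫ : ℝ) = ⟪x t, N t z⟫ := by
        rw [← hNsym t z (x t)]; exact real_inner_comm _ _
      simp only [map_sub, inner_sub_left, inner_sub_right, h1]
      ring
    have hid : ∀ t : ℝ, (⟪x t, N t (p - q)⟫ : ℝ)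
        = ((⟪p, N t p⟫ : ℝ) - ⟪q, N t q⟫
          - ((⟪x t - p, N t (x t - p)⟫ : ℝ) - ⟪x t - q, N t (x t - q)⟫))/2 := by
      intro t
      have h1 := hexp t p
      have h2 := hexp t q
      have h3 : (⟪x t, N t (p - q)⟫ : ℝ) = ⟪x t, N t p⟫ - ⟪x t, N t q⟫ := by
        rw [map_sub, inner_sub_right]
      rw [h3]; rw [h1, h2]; ring
    refine ⟨((⟪p, S p⟫ : ℝ) - ⟪q, S q⟫ - (rp - rq))/2, ?_⟩
    have := (((hSinner p p).sub (hSinner q q)).sub (hrp.sub hrq)).div_const 2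
    exact this.congr fun t => (hid t).symm
  -- (h) cluster limit identification
  have hclust : ∀ (p : H) (u : ℕ → ℝ), Tendsto u atTop atTop →
      (∀ w : H, Tendsto (fun n => (⟪x (u n), w⟫ : ℝ)) atTop (nhds (⟪p, w⟫ : ℝ))) →
      ∀ w : H, Tendsto (fun n => (⟪x (u n), N (u n) w⟫ : ℝ)) atTop (nhds (⟪p, S w⟫ : ℝ)) := by
    intro p u hu hweak w
    have h1 : Tendsto (fun n => (⟪x (u n), S w⟫ : ℝ)) atTop (nhds (⟪p, S w⟫ : ℝ)) := hweak (S w)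
    have h2 : Tendsto (fun n => (⟪x (u n), N (u n) w - S w⟫ : ℝ)) atTop (nhds 0) := by
      have hg : Tendsto (fun n => R * ‖N (u n) w - S w‖) atTop (nhds 0) := by
        have h3 : Tendsto (fun n => N (u n) w - S w) atTop (nhds 0) := by
          have h4 := (hS w).comp hu
          simpa using h4.sub (tendsto_const_nhds : Tendsto (fun _ : ℕ => S w) atTop (nhds (S w)))
        have := (h3.norm).const_mul R
        simpa using this
      apply squeeze_zero_norm' ?_ hg
      filter_upwards [hu.eventually (eventually_ge_atTop T₀)] with n hn
      calc ‖(⟪x (u n), N (u n) w - S w⟫ : ℝ)‖ ≤ ‖x (u n)‖ * ‖N (u n) w - S w‖ :=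
            norm_inner_le_norm _ _
        _ ≤ R * ‖N (u n) w - S w‖ := mul_le_mul_of_nonneg_right (hR _ hn) (norm_nonneg _)
    have h5 := h2.add h1
    rw [zero_add] at h5
    refine h5.congr fun n => ?_
    rw [inner_sub_right]; ring
  -- (i) uniqueness of weak cluster points
  have huniq : ∀ p q : H,
      (∃ u : ℕ → ℝ, Tendsto u atTop atTop ∧
        ∀ w : H, Tendsto (fun n => (⟪x (u n), w⟫ : ℝ)) atTop (nhds (⟪p, w⟫ : ℝ))) →
      (∃ u : ℕ → ℝ, Tendsto u atTop atTop ∧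
        ∀ w : H, Tendsto (fun n => (⟪x (u n), w⟫ : ℝ)) atTop (nhds (⟪q, w⟫ : ℝ))) →
      p = q := by
    rintro p q ⟨u, hu, hup⟩ ⟨u', hu', huq⟩
    have hpC := hii p ⟨u, hu, hup⟩
    have hqC := hii q ⟨u', hu', huq⟩
    obtain ⟨cpq, hcpq⟩ := hcross p hpC q hqC
    have e1 : cpq = (⟪p, S (p - q)⟫ : ℝ) :=
      tendsto_nhds_unique (hcpq.comp hu) (hclust p u hu hup (p - q))
    have e2 : cpq = (⟪q, S (p - q)⟫ : ℝ) :=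
      tendsto_nhds_unique (hcpq.comp hu') (hclust q u' hu' huq (p - q))
    have h0 : (⟪p - q, S (p - q)⟫ : ℝ) = 0 := by
      rw [inner_sub_left]; rw [← e1, ← e2]; ring
    have h1 := hSco (p - q)
    rw [h0] at h1
    have h2 : ‖p - q‖ = 0 := by
      by_contra hne
      have hpos : 0 < ‖p - q‖ := lt_of_le_of_ne (norm_nonneg _) (Ne.symm hne)
      nlinarith [mul_pos hα (mul_pos hpos hpos)]
    have := norm_eq_zero.mp h2
    exact sub_eq_zero.mp this
  -- (j) existence of a weak cluster point and conclusion
  have hxbnd : ∀ n : ℕ, ‖x (T₀ + n)‖ ≤ R :=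
    fun n => hR _ (le_add_of_nonneg_right (Nat.cast_nonneg n))
  obtain ⟨p, φ, hφ, hweak⟩ := exists_weak_subseq (fun n => x (T₀ + n)) R hxbnd
  have hu₀ : Tendsto (fun n : ℕ => T₀ + (n : ℝ)) atTop atTop :=
    tendsto_atTop_add_const_left _ _ tendsto_natCast_atTop_atTop
  have hup : Tendsto (fun n => T₀ + ((φ n : ℕ) : ℝ)) atTop atTop :=
    hu₀.comp hφ.tendsto_atTop
  have hclp : ∃ u : ℕ → ℝ, Tendsto u atTop atTop ∧
      ∀ w : H, Tendsto (fun n => (⟪x (u n), w⟫ : ℝ)) atTop (nhds (⟪p, w⟫ : ℝ)) :=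
    ⟨fun n => T₀ + ((φ n : ℕ) : ℝ), hup, fun w => hweak w⟩
  refine ⟨p, hii p hclp, fun w => ?_⟩
  apply tendsto_of_subseq_tendsto
  intro ns hns
  obtain ⟨N₁, hN₁⟩ := eventually_atTop.mp (hns.eventually (eventually_ge_atTop T₀))
  have hxbnd' : ∀ n : ℕ, ‖x (ns (n + N₁))‖ ≤ R :=
    fun n => hR _ (hN₁ _ (Nat.le_add_left _ _))
  obtain ⟨q, ψ, hψ, hweak'⟩ := exists_weak_subseq (fun n => x (ns (n + N₁))) R hxbnd'
  have hms : Tendsto (fun n => ns (ψ n + N₁)) atTop atTop := by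
    apply hns.comp
    exact tendsto_atTop_mono (fun n => Nat.le_add_right (ψ n) N₁) hψ.tendsto_atTop
  have hclq : ∃ u : ℕ → ℝ, Tendsto u atTop atTop ∧
      ∀ w : H, Tendsto (fun n => (⟪x (u n), w⟫ : ℝ)) atTop (nhds (⟪q, w⟫ : ℝ)) :=
    ⟨fun n => ns (ψ n + N₁), hms, fun w => hweak' w⟩
  have hqp : q = p := huniq q p hclq hclp
  refine ⟨fun n => ψ n + N₁, ?_⟩
  have := hweak' w
  rw [hqp] at this
  exact this
end

section
/- Let H, G be real Hilbert spaces, f : H → (-∞,+∞] proper convex lsc, h : H → ℝ convex Fréchet differentiable, g : G → (-∞,+∞] proper convex lsc, A : H → G continuous linear. Let (aₙ, aₙ*) be a sequence in the graph of ∂(f+h) and (bₙ, bₙ*) in the graph of ∂g. Suppose aₙ ⇀ x̄ weakly in H, bₙ* ⇀ v̄ weakly in G, aₙ* + A*bₙ* → 0 strongly, and A aₙ − bₙ → 0 strongly. Then ⟨aₙ, aₙ*⟩ + ⟨bₙ, bₙ*⟩ → 0, v̄ ∈ ∂g(A x̄), and −A*v̄ ∈ ∂f(x̄) + ∇h(x̄).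 -/
open scoped RealInnerProductSpace
open Set Filter ContinuousLinearMap

/-- Weakly convergent sequences are norm-bounded (Banach–Steinhaus). -/
lemma weak_bdd {H : Type*} [NormedAddCommGroup H] [InnerProductSpace ℝ H] [CompleteSpace H]
    (a : ℕ → H) (xbar : H)
    (hw : ∀ w : H, Tendsto (fun n => (⟪a n, w⟫ : ℝ)) atTop (nhds ⟪xbar, w⟫)) :
    ∃ C : ℝ, 0 ≤ C ∧ ∀ n, ‖a n‖ ≤ C := by
  obtain ⟨C, hC⟩ := banach_steinhaus (g := fun n => innerSL ℝ (a n)) (fun w => by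
    have h1 : Tendsto (fun n => ‖(⟪a n, w⟫ : ℝ)‖) atTop (nhds ‖(⟪xbar, w⟫ : ℝ)‖) :=
      (hw w).norm
    obtain ⟨C, hC⟩ := h1.bddAbove_range
    exact ⟨C, fun n => by simpa [innerSL_apply_apply] using hC (Set.mem_range_self n)⟩)
  refine ⟨max C 0, le_max_right _ _, fun n => ?_⟩
  have := hC n
  rw [innerSL_apply_norm] at this
  exact this.trans (le_max_left _ _)

/-- Weak lower semicontinuity of convex lsc `EReal`-valued functions along a weakly
convergent sequence. -/
lemma weak_liminf_le {H : Type*} [NormedAddCommGroup H] [InnerProductSpace ℝ H] [CompleteSpace H]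
    (f : H → EReal)
    (hconv : ∀ x y : H, ∀ p q : ℝ, 0 ≤ p → 0 ≤ q → p + q = 1 →
      f (p • x + q • y) ≤ (p : EReal) * f x + (q : EReal) * f y)
    (hlsc : LowerSemicontinuous f) (a : ℕ → H) (xbar : H)
    (hw : ∀ w : H, Tendsto (fun n => (⟪a n, w⟫ : ℝ)) atTop (nhds ⟪xbar, w⟫)) :
    f xbar ≤ Filter.liminf (fun n => f (a n)) atTop := by
  by_contra hlt
  push_neg at hlt
  obtain ⟨r, hr1, hr2⟩ := EReal.exists_between_coe_real hlt
  set C : Set H := f ⁻¹' Iic (r : EReal) with hCdef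
  have hCc : Convex ℝ C := by
    intro x hx y hy p q hp hq hpq
    have h1 : f (p • x + q • y) ≤ (p : EReal) * f x + (q : EReal) * f y :=
      hconv x y p q hp hq hpq
    have h2 : (p : EReal) * f x + (q : EReal) * f y ≤ (p : EReal) * r + (q : EReal) * r :=
      add_le_add (mul_le_mul_of_nonneg_left hx (by exact_mod_cast hp))
        (mul_le_mul_of_nonneg_left hy (by exact_mod_cast hq))
    have h3 : (p : EReal) * r + (q : EReal) * r = ((p * r + q * r : ℝ) : EReal) := by
      push_cast; ring
    have h4 : p * r + q * r = r := by rw [← add_mul, hpq, one_mul]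
    simp only [hCdef, Set.mem_preimage, Set.mem_Iic]
    calc f (p • x + q • y) ≤ (p : EReal) * r + (q : EReal) * r := h1.trans h2
      _ = ((r : ℝ) : EReal) := by rw [h3, h4]
  have hCcl : IsClosed C := hlsc.isClosed_preimage r
  have hx : xbar ∉ C := by
    simp only [hCdef, Set.mem_preimage, Set.mem_Iic]
    exact fun hx => absurd hr2 (not_lt.2 hx)
  obtain ⟨φ, u, hs, hu⟩ := geometric_hahn_banach_closed_point hCc hCcl hx
  set w := (InnerProductSpace.toDual ℝ H).symm φ with hwdef
  have hφ : ∀ y, φ y = ⟪w, y⟫ := by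
    intro y
    rw [← InnerProductSpace.toDual_apply_apply, hwdef, LinearIsometryEquiv.apply_symm_apply]
  have hconvφ : Tendsto (fun n => φ (a n)) atTop (nhds (φ xbar)) := by
    simp only [hφ]
    have := hw w
    simpa [real_inner_comm] using this
  have hfreq : ∃ᶠ n in atTop, f (a n) < (r : EReal) :=
    frequently_lt_of_liminf_lt (by isBoundedDefault) hr1
  have hev : ∀ᶠ n in atTop, u < φ (a n) := hconvφ.eventually_const_lt hu
  obtain ⟨n, hn1, hn2⟩ := (hfreq.and_eventually hev).exists
  exact absurd hn2 (not_lt.2 (le_of_lt (hs (a n) hn1.le)))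

theorem stmt13 {H G : Type*} [NormedAddCommGroup H] [InnerProductSpace ℝ H] [CompleteSpace H]
    [NormedAddCommGroup G] [InnerProductSpace ℝ G] [CompleteSpace G]
    (f : H → EReal) (g : G → EReal)
    (hfproper : (∃ x, f x ≠ ⊤) ∧ ∀ x, f x ≠ ⊥)
    (hfconv : ∀ x y : H, ∀ a b : ℝ, 0 ≤ a → 0 ≤ b → a + b = 1 →
      f (a • x + b • y) ≤ (a : EReal) * f x + (b : EReal) * f y)
    (hflsc : LowerSemicontinuous f)
    (hgproper : (∃ z, g z ≠ ⊤) ∧ ∀ z, g z ≠ ⊥)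
    (hgconv : ∀ x y : G, ∀ a b : ℝ, 0 ≤ a → 0 ≤ b → a + b = 1 →
      g (a • x + b • y) ≤ (a : EReal) * g x + (b : EReal) * g y)
    (hglsc : LowerSemicontinuous g)
    (h : H → ℝ) (h' : H → H) (hhconv : ConvexOn ℝ univ h)
    (hgrad : ∀ x : H, HasGradientAt h (h' x) x)
    (A : H →L[ℝ] G)
    (a : ℕ → H) (astar : ℕ → H) (b : ℕ → G) (bstar : ℕ → G)
    (ha : ∀ n, astar n ∈ subdiff (fun x => f x + ((h x : ℝ) : EReal)) (a n))
    (hb : ∀ n, bstar n ∈ subdiff g (b n))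
    (xbar : H) (vbar : G)
    (haweak : ∀ w : H, Tendsto (fun n => (⟪a n, w⟫ : ℝ)) atTop (nhds ⟪xbar, w⟫))
    (hbweak : ∀ w : G, Tendsto (fun n => (⟪bstar n, w⟫ : ℝ)) atTop (nhds ⟪vbar, w⟫))
    (hsum : Tendsto (fun n => astar n + (adjoint A) (bstar n)) atTop (nhds 0))
    (hAab : Tendsto (fun n => A (a n) - b n) atTop (nhds 0)) :
    Tendsto (fun n => (⟪a n, astar n⟫ : ℝ) + ⟪b n, bstar n⟫) atTop (nhds 0) ∧
    vbar ∈ subdiff g (A xbar) ∧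
    -((adjoint A) vbar) - h' xbar ∈ subdiff f xbar := by
  obtain ⟨⟨x₀, hx₀⟩, hfbot⟩ := hfproper
  obtain ⟨⟨z₀, hz₀⟩, hgbot⟩ := hgproper
  -- finiteness along the sequence
  have hfa : ∀ n, f (a n) ≠ ⊤ := by
    intro n hn
    have h1 := ha n x₀
    simp only [subdiff, Set.mem_setOf_eq] at h1
    rw [hn] at h1
    have h2 : (⊤ : EReal) + ((h (a n) : ℝ) : EReal) + ((⟪astar n, x₀ - a n⟫ : ℝ) : EReal) = ⊤ := by
      rw [EReal.top_add_coe, EReal.top_add_coe]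
    rw [h2] at h1
    have h3 : f x₀ + ((h x₀ : ℝ) : EReal) < ⊤ := EReal.add_lt_top hx₀ (EReal.coe_ne_top _)
    exact absurd (h1.trans_lt h3) (lt_irrefl _)
  have hgb : ∀ n, g (b n) ≠ ⊤ := by
    intro n hn
    have h1 := hb n z₀
    rw [hn, EReal.top_add_coe] at h1
    exact absurd (h1.trans_lt (hz₀.lt_top)) (lt_irrefl _)
  set fa : ℕ → ℝ := fun n => (f (a n)).toReal with hfadef
  set gb : ℕ → ℝ := fun n => (g (b n)).toReal with hgbdef
  have hfa' : ∀ n, ((fa n : ℝ) : EReal) = f (a n) := fun n => EReal.coe_toReal (hfa n) (hfbot _)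
  have hgb' : ∀ n, ((gb n : ℝ) : EReal) = g (b n) := fun n => EReal.coe_toReal (hgb n) (hgbot _)
  -- real-valued subdifferential inequalities
  have hA : ∀ n, ∀ x' : H, f x' ≠ ⊤ →
      fa n + h (a n) + (⟪astar n, x'⟫ - ⟪a n, astar n⟫) ≤ (f x').toReal + h x' := by
    intro n x' hx'
    have h1 := ha n x'
    simp only [subdiff, Set.mem_setOf_eq] at h1
    rw [← hfa' n, ← EReal.coe_toReal hx' (hfbot x')] at h1
    have h2 : fa n + h (a n) + ⟪astar n, x' - a n⟫ ≤ (f x').toReal + h x' := by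
      exact_mod_cast h1
    rw [inner_sub_right] at h2
    linarith [real_inner_comm (a n) (astar n)]
  have hB : ∀ n, ∀ z' : G, g z' ≠ ⊤ →
      gb n + (⟪bstar n, z'⟫ - ⟪b n, bstar n⟫) ≤ (g z').toReal := by
    intro n z' hz'
    have h1 := hb n z'
    rw [← hgb' n, ← EReal.coe_toReal hz' (hgbot z')] at h1
    have h2 : gb n + ⟪bstar n, z' - b n⟫ ≤ (g z').toReal := by exact_mod_cast h1
    rw [inner_sub_right] at h2
    linarith [real_inner_comm (b n) (bstar n)]
  -- boundedness
  obtain ⟨Ca, hCa0, hCa⟩ := weak_bdd a xbar haweak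
  obtain ⟨Cb, hCb0, hCb⟩ := weak_bdd bstar vbar hbweak
  -- part 1
  have hkey : ∀ n, (⟪a n, astar n⟫ : ℝ) + ⟪b n, bstar n⟫
      = ⟪a n, astar n + (adjoint A) (bstar n)⟫ - ⟪A (a n) - b n, bstar n⟫ := by
    intro n
    rw [inner_add_right, inner_sub_left, adjoint_inner_right]
    ring
  have t1 : Tendsto (fun n => (⟪a n, astar n + (adjoint A) (bstar n)⟫ : ℝ)) atTop (nhds 0) := by
    apply squeeze_zero_norm (a := fun n => Ca * ‖astar n + (adjoint A) (bstar n)‖)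
    · intro n
      rw [Real.norm_eq_abs]
      exact (abs_real_inner_le_norm _ _).trans
        (mul_le_mul_of_nonneg_right (hCa n) (norm_nonneg _))
    · simpa using (hsum.norm.const_mul Ca)
  have t2 : Tendsto (fun n => (⟪A (a n) - b n, bstar n⟫ : ℝ)) atTop (nhds 0) := by
    apply squeeze_zero_norm (a := fun n => ‖A (a n) - b n‖ * Cb)
    · intro n
      rw [Real.norm_eq_abs]
      exact (abs_real_inner_le_norm _ _).trans
        (mul_le_mul_of_nonneg_left (hCb n) (norm_nonneg _))
    · simpa using (hAab.norm.mul_const Cb)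
  have part1 : Tendsto (fun n => (⟪a n, astar n⟫ : ℝ) + ⟪b n, bstar n⟫) atTop (nhds 0) := by
    have := t1.sub t2
    rw [sub_zero] at this
    exact this.congr (fun n => (hkey n).symm)
  -- weak limits
  have hbw : ∀ w : G, Tendsto (fun n => (⟪b n, w⟫ : ℝ)) atTop (nhds ⟪A xbar, w⟫) := by
    intro w
    have e : ∀ n, (⟪b n, w⟫ : ℝ) = ⟪a n, (adjoint A) w⟫ - ⟪A (a n) - b n, w⟫ := by
      intro n
      rw [inner_sub_left, adjoint_inner_right]
      ring
    have s2 : Tendsto (fun n => (⟪A (a n) - b n, w⟫ : ℝ)) atTop (nhds 0) := by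
      apply squeeze_zero_norm (a := fun n => ‖A (a n) - b n‖ * ‖w‖)
      · intro n
        rw [Real.norm_eq_abs]
        exact abs_real_inner_le_norm _ _
      · simpa using (hAab.norm.mul_const ‖w‖)
    have := (haweak ((adjoint A) w)).sub s2
    rw [sub_zero] at this
    have e2 : (⟪xbar, (adjoint A) w⟫ : ℝ) = ⟪A xbar, w⟫ := adjoint_inner_right A xbar w
    rw [e2] at this
    exact this.congr (fun n => (e n).symm)
  have hastarw : ∀ w : H,
      Tendsto (fun n => (⟪astar n, w⟫ : ℝ)) atTop (nhds ⟪-((adjoint A) vbar), w⟫) := by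
    intro w
    have e : ∀ n, (⟪astar n, w⟫ : ℝ)
        = ⟪astar n + (adjoint A) (bstar n), w⟫ - ⟪bstar n, A w⟫ := by
      intro n
      rw [inner_add_left, adjoint_inner_left]
      ring
    have s1 : Tendsto (fun n => (⟪astar n + (adjoint A) (bstar n), w⟫ : ℝ)) atTop (nhds 0) := by
      apply squeeze_zero_norm (a := fun n => ‖astar n + (adjoint A) (bstar n)‖ * ‖w‖)
      · intro n
        rw [Real.norm_eq_abs]
        exact abs_real_inner_le_norm _ _
      · simpa using (hsum.norm.mul_const ‖w‖)
    have := s1.sub (hbweak (A w))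
    rw [zero_sub] at this
    have e2 : -(⟪vbar, A w⟫ : ℝ) = ⟪-((adjoint A) vbar), w⟫ := by
      rw [inner_neg_left, adjoint_inner_left]
    rw [e2] at this
    exact this.congr (fun n => (e n).symm)
  -- liminf inequalities (weak lower semicontinuity)
  have hlimf : f xbar ≤ Filter.liminf (fun n => f (a n)) atTop :=
    weak_liminf_le f hfconv hflsc a xbar haweak
  have hhd : Differentiable ℝ h := fun x => (hgrad x).hasFDerivAt.differentiableAt
  have hlimh : ((h xbar : ℝ) : EReal)
      ≤ Filter.liminf (fun n => ((h (a n) : ℝ) : EReal)) atTop := by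
    apply weak_liminf_le (fun x => ((h x : ℝ) : EReal)) ?_ ?_ a xbar haweak
    · intro x y p q hp hq hpq
      have := hhconv.2 (Set.mem_univ x) (Set.mem_univ y) hp hq hpq
      simp only [smul_eq_mul] at this
      show ((h (p • x + q • y) : ℝ) : EReal) ≤ (p : EReal) * ((h x : ℝ) : EReal) + (q : EReal) * ((h y : ℝ) : EReal)
      exact_mod_cast this
    · exact (continuous_coe_real_ereal.comp hhd.continuous).lowerSemicontinuous
  have hlimg : g (A xbar) ≤ Filter.liminf (fun n => g (b n)) atTop :=
    weak_liminf_le g hgconv hglsc b (A xbar) hbw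
  -- eventual lower bounds
  have hev1 : ∀ α : ℝ, (α : EReal) < f xbar → ∀ᶠ n in atTop, α < fa n := by
    intro α hα
    have := eventually_lt_of_lt_liminf (hα.trans_le hlimf)
    filter_upwards [this] with n hn
    rw [← hfa' n] at hn
    exact_mod_cast hn
  have hev2 : ∀ β : ℝ, β < h xbar → ∀ᶠ n in atTop, β < h (a n) := by
    intro β hβ
    have hβ' : ((β : ℝ) : EReal) < ((h xbar : ℝ) : EReal) := by exact_mod_cast hβ
    have := eventually_lt_of_lt_liminf (hβ'.trans_le hlimh)
    filter_upwards [this] with n hn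
    exact_mod_cast hn
  have hev3 : ∀ β : ℝ, (β : EReal) < g (A xbar) → ∀ᶠ n in atTop, β < gb n := by
    intro β hβ
    have := eventually_lt_of_lt_liminf (hβ.trans_le hlimg)
    filter_upwards [this] with n hn
    rw [← hgb' n] at hn
    exact_mod_cast hn
  -- master inequality
  have master : ∀ (x' : H) (z' : G), f x' ≠ ⊤ → g z' ≠ ⊤ → ∀ α β ε : ℝ,
      (α : EReal) < f xbar → (β : EReal) < g (A xbar) → 0 < ε →
      α + (h xbar - ε) + β + ((⟪-((adjoint A) vbar), x'⟫ + ⟪vbar, z'⟫) - ε)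
        ≤ (f x').toReal + h x' + (g z').toReal := by
    intro x' z' hx' hz' α β ε hα hβ hε
    set L : ℝ := ⟪-((adjoint A) vbar), x'⟫ + ⟪vbar, z'⟫ with hLdef
    have hPQ : Tendsto (fun n => ((⟪astar n, x'⟫ : ℝ) - ⟪a n, astar n⟫)
        + ((⟪bstar n, z'⟫ : ℝ) - ⟪b n, bstar n⟫)) atTop (nhds L) := by
      have h1 := ((hastarw x').add (hbweak z')).sub part1
      rw [sub_zero] at h1
      exact h1.congr (fun n => by ring)
    have h4 : ∀ᶠ n in atTop, L - ε < (⟪astar n, x'⟫ : ℝ) - ⟪a n, astar n⟫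
        + ((⟪bstar n, z'⟫ : ℝ) - ⟪b n, bstar n⟫) :=
      hPQ.eventually_const_lt (by linarith)
    obtain ⟨n, h1, h2, h3a, h3b⟩ :=
      ((hev1 α hα).and (((hev2 (h xbar - ε) (by linarith)).and
        ((hev3 β hβ).and h4)))).exists
    linarith [hA n x' hx', hB n z' hz']
  -- finiteness at the limit point
  have hftop : f xbar ≠ ⊤ := by
    intro htop
    obtain ⟨β, _, hβ⟩ := EReal.exists_between_coe_real (bot_lt_iff_ne_bot.2 (hgbot (A xbar)))
    set M : ℝ := (f x₀).toReal + h x₀ + (g z₀).toReal with hM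
    set L0 : ℝ := ⟪-((adjoint A) vbar), x₀⟫ + ⟪vbar, z₀⟫ with hL0
    have := master x₀ z₀ hx₀ hz₀ (M - (h xbar - 1) - β - (L0 - 1) + 1) β 1
      (by rw [htop]; exact EReal.coe_lt_top _) hβ one_pos
    linarith
  have hgtop : g (A xbar) ≠ ⊤ := by
    intro htop
    obtain ⟨α, _, hα⟩ := EReal.exists_between_coe_real (bot_lt_iff_ne_bot.2 (hfbot xbar))
    set M : ℝ := (f x₀).toReal + h x₀ + (g z₀).toReal with hM
    set L0 : ℝ := ⟪-((adjoint A) vbar), x₀⟫ + ⟪vbar, z₀⟫ with hL0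
    have := master x₀ z₀ hx₀ hz₀ α (M - (h xbar - 1) - α - (L0 - 1) + 1) 1
      hα (by rw [htop]; exact EReal.coe_lt_top _) one_pos
    linarith
  set fr : ℝ := (f xbar).toReal with hfrdef
  set gr : ℝ := (g (A xbar)).toReal with hgrdef
  have hfr : ((fr : ℝ) : EReal) = f xbar := EReal.coe_toReal hftop (hfbot _)
  have hgr : ((gr : ℝ) : EReal) = g (A xbar) := EReal.coe_toReal hgtop (hgbot _)
  -- the key real inequality
  have KEY : ∀ (x' : H) (z' : G), f x' ≠ ⊤ → g z' ≠ ⊤ →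
      fr + h xbar + gr + (⟪-((adjoint A) vbar), x'⟫ + ⟪vbar, z'⟫)
        ≤ (f x').toReal + h x' + (g z').toReal := by
    intro x' z' hx' hz'
    apply le_of_forall_sub_le
    intro ε hε
    have h1 := master x' z' hx' hz' (fr - ε / 4) (gr - ε / 4) (ε / 4)
      (by rw [← hfr]; exact_mod_cast sub_lt_self fr (by linarith))
      (by rw [← hgr]; exact_mod_cast sub_lt_self gr (by linarith))
      (by linarith)
    linarith
  refine ⟨part1, ?_, ?_⟩
  · -- vbar ∈ ∂g (A xbar)
    intro z'
    by_cases hz' : g z' = ⊤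
    · rw [hz']; exact le_top
    have hk := KEY xbar z' hftop hz'
    have e1 : (⟪-((adjoint A) vbar), xbar⟫ : ℝ) = -⟪vbar, A xbar⟫ := by
      rw [inner_neg_left, adjoint_inner_left]
    rw [← hgr, ← EReal.coe_toReal hz' (hgbot z')]
    have goalr : gr + ⟪vbar, z' - A xbar⟫ ≤ (g z').toReal := by
      rw [inner_sub_right]
      have : (f xbar).toReal = fr := rfl
      rw [this, e1] at hk
      linarith
    exact_mod_cast goalr
  · -- -A* vbar - h' xbar ∈ ∂f xbar
    intro x'
    by_cases hx' : f x' = ⊤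
    · rw [hx']; exact le_top
    set u : H := -((adjoint A) vbar) with hudef
    set d : H := x' - xbar with hddef
    have SF : ∀ y : H, f y ≠ ⊤ →
        fr + h xbar + (⟪u, y⟫ + ⟪vbar, A xbar⟫) ≤ (f y).toReal + h y := by
      intro y hy
      have hk := KEY y (A xbar) hy hgtop
      have : (g (A xbar)).toReal = gr := rfl
      rw [this] at hk
      linarith
    have h8 : (⟪u, xbar⟫ : ℝ) = -⟪vbar, A xbar⟫ := by
      rw [hudef, inner_neg_left, adjoint_inner_left]
    have hstep : ∀ t : ℝ, 0 < t → t ≤ 1 →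
        fr + ⟪u, d⟫ - (f x').toReal ≤ (h (xbar + t • d) - h xbar) / t := by
      intro t ht ht1
      have hconvx : f (xbar + t • d) ≤ (((1 - t) * fr + t * (f x').toReal : ℝ) : EReal) := by
        have hcx := hfconv xbar x' (1 - t) t (by linarith) ht.le (by ring)
        have heq : (1 - t) • xbar + t • x' = xbar + t • d := by
          rw [hddef]; module
        rw [heq] at hcx
        refine hcx.trans (le_of_eq ?_)
        rw [← hfr, ← EReal.coe_toReal hx' (hfbot x')]
        simp only [EReal.toReal_coe]
        push_cast
        ring
      have hxtne : f (xbar + t • d) ≠ ⊤ := by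
        intro htop
        rw [htop] at hconvx
        exact EReal.coe_ne_top _ (top_le_iff.1 hconvx)
      have h5 := SF (xbar + t • d) hxtne
      have h6 : (f (xbar + t • d)).toReal ≤ (1 - t) * fr + t * (f x').toReal := by
        rw [← EReal.coe_toReal hxtne (hfbot _)] at hconvx
        exact_mod_cast hconvx
      have h7 : (⟪u, xbar + t • d⟫ : ℝ) = ⟪u, xbar⟫ + t * ⟪u, d⟫ := by
        rw [inner_add_right, real_inner_smul_right]
      rw [le_div_iff₀ ht]
      nlinarith [h5, h6, h7, h8]
    have hc : HasDerivAt (fun t : ℝ => xbar + t • d) d 0 := by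
      simpa using ((hasDerivAt_id (0 : ℝ)).smul_const d).const_add xbar
    have hF : HasFDerivAt h (InnerProductSpace.toDual ℝ H (h' xbar)) (xbar + (0 : ℝ) • d) := by
      simpa using (hgrad xbar).hasFDerivAt
    have hψ : HasDerivAt (fun t : ℝ => h (xbar + t • d)) (⟪h' xbar, d⟫ : ℝ) 0 := by
      have := hF.comp_hasDerivAt 0 hc
      simp only [InnerProductSpace.toDual_apply_apply] at this
      exact this
    have hslope : Tendsto (slope (fun t : ℝ => h (xbar + t • d)) 0) (nhdsWithin 0 (Set.Ioi 0))
        (nhds (⟪h' xbar, d⟫ : ℝ)) :=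
      (hasDerivAt_iff_tendsto_slope.1 hψ).mono_left
        (nhdsWithin_mono 0 (fun t ht => ne_of_gt ht))
    have hfinal : fr + ⟪u, d⟫ - (f x').toReal ≤ ⟪h' xbar, d⟫ := by
      refine ge_of_tendsto hslope ?_
      filter_upwards [Ioo_mem_nhdsGT_of_mem (Set.mem_Ico.2 ⟨le_refl (0 : ℝ), one_pos⟩)]
        with t ht
      have := hstep t ht.1 ht.2.le
      have hsl : slope (fun t : ℝ => h (xbar + t • d)) 0 t
          = (h (xbar + t • d) - h xbar) / t := by
        rw [slope_def_field]
        simp [div_eq_inv_mul]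
      rw [hsl]
      exact this
    rw [← hfr, ← EReal.coe_toReal hx' (hfbot x')]
    have goalr : fr + ⟪u - h' xbar, d⟫ ≤ (f x').toReal := by
      rw [inner_sub_left]
      linarith
    show ((fr : ℝ) : EReal) + ((⟪u - h' xbar, d⟫ : ℝ) : EReal) ≤ (((f x').toReal : ℝ) : EReal)
    exact_mod_cast goalr
end

section
/- Let 1 ≤ p < ∞ and 1 ≤ r ≤ ∞. Suppose A : [0,+∞) → [0,+∞) is locally absolutely continuous with A ∈ Lᵖ([0,+∞), ℝ), B : [0,+∞) → ℝ satisfies B ∈ Lʳ([0,+∞), ℝ), and (d/dt)A(t) ≤ B(t) for almost every t ∈ [0,+∞). Then lim_{t→+∞} A(t) = 0. -/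
open Set Filter MeasureTheory

lemma tail_small (h : ℝ → ℝ) (hint : IntegrableOn h (Ioi 0) volume)
    (c : ℝ) (hc : 0 < c) : ∃ T, 1 ≤ T ∧ ∫ x in Ioi T, h x < c := by
  have htend := MeasureTheory.intervalIntegral_tendsto_integral_Ioi 0 hint
    (tendsto_id (α := ℝ))
  set I := ∫ x in Ioi (0:ℝ), h x with hI
  have h2 : Tendsto (fun T => I - ∫ x in (0:ℝ)..T, h x) atTop (nhds 0) := by
    simpa using ((tendsto_const_nhds (x := I)).sub htend)
  have h3 : ∀ᶠ T in atTop, I - ∫ x in (0:ℝ)..T, h x < c := h2.eventually (gt_mem_nhds hc)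
  obtain ⟨T, hTc, hT1⟩ := (h3.and (eventually_ge_atTop (1:ℝ))).exists
  refine ⟨T, hT1, ?_⟩
  have hT0 : (0:ℝ) ≤ T := by linarith
  have hi1 : IntegrableOn h (Ioc 0 T) volume := hint.mono_set Ioc_subset_Ioi_self
  have hi2 : IntegrableOn h (Ioi T) volume := hint.mono_set (Ioi_subset_Ioi hT0)
  have hsplit : I = (∫ x in Ioc 0 T, h x) + ∫ x in Ioi T, h x := by
    rw [← setIntegral_union (Ioc_disjoint_Ioi le_rfl) measurableSet_Ioi hi1 hi2,
      Ioc_union_Ioi_eq_Ioi hT0]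
  rw [intervalIntegral.integral_of_le hT0] at hTc
  linarith

theorem stmt19 (p : ℝ) (hp : 1 ≤ p) (r : ENNReal) (hr : 1 ≤ r)
    (A : ℝ → ℝ) (A' : ℝ → ℝ) (B : ℝ → ℝ)
    (hApos : ∀ t : ℝ, 0 ≤ t → 0 ≤ A t)
    -- A is locally absolutely continuous on [0, ∞) with a.e. derivative A'
    (hA'int : ∀ T : ℝ, 0 < T → IntervalIntegrable A' volume 0 T)
    (hA : ∀ t : ℝ, 0 ≤ t → A t = A 0 + ∫ s in (0 : ℝ)..t, A' s)
    -- A ∈ Lᵖ([0, ∞))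
    (hALp : MemLp A (ENNReal.ofReal p) (volume.restrict (Ici (0 : ℝ))))
    -- B ∈ Lʳ([0, ∞))
    (hBLr : MemLp B r (volume.restrict (Ici (0 : ℝ))))
    -- (d/dt) A(t) ≤ B(t) for almost every t ≥ 0
    (hle : ∀ᵐ t ∂(volume.restrict (Ici (0 : ℝ))), A' t ≤ B t) :
    Tendsto A atTop (nhds 0) := by
  -- integrability of B on bounded intervals in [0,∞)
  have hBint : ∀ a b : ℝ, 0 ≤ a → IntegrableOn B (Ioc a b) volume := by
    intro a b ha
    have h1 : MemLp B r ((volume.restrict (Ici (0:ℝ))).restrict (Ioc a b)) := hBLr.restrict _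
    rw [Measure.restrict_restrict measurableSet_Ioc,
      inter_eq_left.mpr (fun x hx => mem_Ici.mpr (le_trans ha (le_of_lt hx.1)))] at h1
    exact h1.integrable hr
  -- key bound on integrals of |B| over short far-out intervals
  have hB : ∀ ε : ℝ, 0 < ε → ∃ δ : ℝ, 0 < δ ∧ δ ≤ 1 ∧ ∃ T : ℝ, 1 ≤ T ∧
      ∀ s : ℝ, T ≤ s → ∫ x in Ioc s (s + δ), |B x| ≤ ε := by
    intro ε hε
    by_cases hrtop : r = ⊤
    · -- essentially bounded case
      set M := (eLpNormEssSup B (volume.restrict (Ici (0:ℝ)))).toReal with hM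
      have hMlt : eLpNormEssSup B (volume.restrict (Ici (0:ℝ))) < ⊤ := by
        have := hBLr.2
        rwa [hrtop, eLpNorm_exponent_top] at this
      have hM0 : 0 ≤ M := ENNReal.toReal_nonneg
      have hae : ∀ᵐ x ∂(volume.restrict (Ici (0:ℝ))), ‖B x‖ ≤ M := by
        filter_upwards [enorm_ae_le_eLpNormEssSup B (volume.restrict (Ici (0:ℝ)))] with x hx
        have := ENNReal.toReal_mono hMlt.ne hx
        simpa using this
      refine ⟨min 1 (ε / (M + 1)), lt_min one_pos (by positivity), min_le_left _ _, 1, le_refl _,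
        fun s hs => ?_⟩
      set δ := min 1 (ε / (M + 1)) with hδ
      have hs0 : (0:ℝ) ≤ s := by linarith
      have hδ0 : 0 < δ := lt_min one_pos (by positivity)
      have hrestr : volume.restrict (Ioc s (s + δ)) =
          (volume.restrict (Ici (0:ℝ))).restrict (Ioc s (s + δ)) := by
        rw [Measure.restrict_restrict measurableSet_Ioc,
          inter_eq_left.mpr (fun x hx => mem_Ici.mpr (le_trans hs0 (le_of_lt hx.1)))]
      have hae2 : ∀ᵐ x ∂(volume.restrict (Ioc s (s + δ))), ‖|B x|‖ ≤ M := by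
        rw [hrestr]
        filter_upwards [ae_restrict_of_ae hae] with x hx
        simpa using hx
      have hfin : volume (Ioc s (s + δ)) < ⊤ := by
        rw [Real.volume_Ioc]; exact ENNReal.ofReal_lt_top
      have hnorm := norm_setIntegral_le_of_norm_le_const_ae hfin hae2
        (f := fun x => |B x|)
      have hvol : (volume (Ioc s (s + δ))).toReal = δ := by
        rw [Real.volume_Ioc, ENNReal.toReal_ofReal (by linarith)]
        ring
      calc ∫ x in Ioc s (s + δ), |B x| ≤ ‖∫ x in Ioc s (s + δ), |B x|‖ := le_abs_self _
        _ ≤ M * (volume (Ioc s (s + δ))).toReal := hnorm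
        _ = M * δ := by rw [hvol]
        _ ≤ M * (ε / (M + 1)) := by
            apply mul_le_mul_of_nonneg_left (min_le_right _ _) hM0
        _ ≤ ε := by
            rw [div_eq_inv_mul, ← mul_assoc]
            have : M * (M + 1)⁻¹ ≤ 1 := by
              rw [mul_inv_le_iff₀ (by positivity)]; linarith
            nlinarith
    · -- r < ∞
      set ρ := r.toReal with hρdef
      have hρ1 : 1 ≤ ρ := by
        rw [hρdef, ← ENNReal.toReal_one]
        exact ENNReal.toReal_mono hrtop hr
      have hr0 : r ≠ 0 := by intro h; rw [h] at hr; simp at hr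
      have hint : Integrable (fun x => ‖B x‖ ^ ρ) (volume.restrict (Ici (0:ℝ))) :=
        hBLr.integrable_norm_rpow hr0 hrtop
      have hintI : IntegrableOn (fun x => ‖B x‖ ^ ρ) (Ici 0) volume := hint
      have hint' : IntegrableOn (fun x => ‖B x‖ ^ ρ) (Ioi 0) volume :=
        hintI.mono_set Ioi_subset_Ici_self
      obtain ⟨T, hT1, hTtail⟩ := tail_small _ hint' (ε/2) (by linarith)
      refine ⟨min 1 (ε/2), lt_min one_pos (by linarith), min_le_left _ _, T, hT1,
        fun s hs => ?_⟩
      set δ := min 1 (ε/2) with hδ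
      have hδ0 : 0 < δ := lt_min one_pos (by linarith)
      have hs0 : (0:ℝ) ≤ s := by linarith
      have hiB : IntegrableOn (fun x => |B x|) (Ioc s (s + δ)) volume := (hBint s (s+δ) hs0).abs
      have hiρT : IntegrableOn (fun x => ‖B x‖ ^ ρ) (Ioi T) volume :=
        hint'.mono_set (Ioi_subset_Ioi (by linarith))
      have hiρ : IntegrableOn (fun x => ‖B x‖ ^ ρ) (Ioc s (s + δ)) volume :=
        hiρT.mono_set (fun x hx => mem_Ioi.mpr (lt_of_le_of_lt hs hx.1))
      have hi1 : IntegrableOn (fun _ : ℝ => (1:ℝ)) (Ioc s (s + δ)) volume :=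
        (integrableOn_const_iff).mpr (Or.inr (by rw [Real.volume_Ioc]; exact ENNReal.ofReal_lt_top))
      have step1 : ∫ x in Ioc s (s + δ), |B x| ≤ ∫ x in Ioc s (s + δ), (1 + ‖B x‖ ^ ρ) := by
        refine setIntegral_mono_on hiB (hi1.add hiρ) measurableSet_Ioc (fun x _ => ?_)
        rcases le_or_gt (|B x|) 1 with h | h
        · have : (0:ℝ) ≤ ‖B x‖ ^ ρ := Real.rpow_nonneg (norm_nonneg _) _
          linarith
        · have h1 : ‖B x‖ = |B x| := Real.norm_eq_abs _
          have : |B x| ^ (1:ℝ) ≤ |B x| ^ ρ :=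
            Real.rpow_le_rpow_of_exponent_le (le_of_lt h) hρ1
          rw [Real.rpow_one] at this
          rw [h1]; linarith
      have step2 : ∫ x in Ioc s (s + δ), (1 + ‖B x‖ ^ ρ)
          = δ + ∫ x in Ioc s (s + δ), ‖B x‖ ^ ρ := by
        rw [integral_add hi1 hiρ, setIntegral_const, measureReal_def, Real.volume_Ioc,
          ENNReal.toReal_ofReal (by linarith), smul_eq_mul]
        ring_nf
      have step3 : ∫ x in Ioc s (s + δ), ‖B x‖ ^ ρ ≤ ∫ x in Ioi T, ‖B x‖ ^ ρ := by
        refine setIntegral_mono_set hiρT ?_ ?_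
        · exact Eventually.of_forall (fun x => Real.rpow_nonneg (norm_nonneg _) _)
        · exact HasSubset.Subset.eventuallyLE (fun x hx => mem_Ioi.mpr (lt_of_le_of_lt hs hx.1))
      have : δ ≤ ε/2 := min_le_right _ _
      linarith
  -- integrability of ‖A‖^p
  have hp0 : (0:ℝ) < p := by linarith
  have hAp : Integrable (fun x => ‖A x‖ ^ p) (volume.restrict (Ici (0:ℝ))) := by
    have h1 := hALp.integrable_norm_rpow (by simp [ENNReal.ofReal_eq_zero]; linarith)
      ENNReal.ofReal_ne_top
    rwa [ENNReal.toReal_ofReal (by linarith)] at h1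
  have hApI : IntegrableOn (fun x => ‖A x‖ ^ p) (Ici 0) volume := hAp
  have hAp' : IntegrableOn (fun x => ‖A x‖ ^ p) (Ioi 0) volume :=
    hApI.mono_set Ioi_subset_Ici_self
  -- main argument
  rw [Metric.tendsto_atTop]
  intro ε hε
  obtain ⟨δ, hδ0, hδ1, T₁, hT₁1, hBbd⟩ := hB (ε/4) (by linarith)
  obtain ⟨T₂', hT₂'1, hAtail⟩ := tail_small _ hAp' ((ε/4)^p * δ)
    (by positivity)
  set T₂ := max T₂' T₁ with hT₂
  refine ⟨T₂ + δ + 1, fun t ht => ?_⟩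
  have hT₂1 : 1 ≤ T₂ := le_trans hT₂'1 (le_max_left _ _)
  have ht0 : (0:ℝ) < t := by have := le_max_left T₂' T₁; linarith
  -- find a good point s in [t - δ, t]
  have hex : ∃ s ∈ Icc (t - δ) t, A s ≤ ε/4 := by
    by_contra hcon
    push_neg at hcon
    have hIccInt : IntegrableOn (fun x => ‖A x‖ ^ p) (Icc (t - δ) t) volume := by
      refine (hAp'.mono_set ?_)
      intro x hx
      have : T₂ + 1 ≤ t - δ := by linarith
      exact mem_Ioi.mpr (by have := hx.1; linarith)
    have h1 : (ε/4)^p * δ ≤ ∫ x in Icc (t - δ) t, ‖A x‖ ^ p := by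
      have hc := setIntegral_ge_of_const_le (measurableSet_Icc)
        (by rw [Real.volume_Icc]; exact ENNReal.ofReal_ne_top)
        (fun x hx => by
          have hAx := hcon x hx
          have hx0 : (0:ℝ) ≤ A x := le_trans (by linarith) (le_of_lt hAx)
          have : ‖A x‖ = A x := by rw [Real.norm_eq_abs, abs_of_nonneg hx0]
          rw [this]
          exact Real.rpow_le_rpow (by linarith) (le_of_lt hAx) (le_of_lt hp0))
        hIccInt
      have hvol : (volume (Icc (t - δ) t)).toReal = δ := by
        rw [Real.volume_Icc, ENNReal.toReal_ofReal (by linarith)]; ring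
      rw [measureReal_def, hvol, smul_eq_mul, mul_comm] at hc
      exact hc
    have h2 : ∫ x in Icc (t - δ) t, ‖A x‖ ^ p ≤ ∫ x in Ioi T₂', ‖A x‖ ^ p := by
      refine setIntegral_mono_set (hAp'.mono_set (Ioi_subset_Ioi (by linarith))) ?_ ?_
      · exact Eventually.of_forall (fun x => Real.rpow_nonneg (norm_nonneg _) _)
      · refine HasSubset.Subset.eventuallyLE (fun x hx => mem_Ioi.mpr ?_)
        have h3 : T₂' ≤ T₂ := le_max_left _ _
        have := hx.1
        linarith
    linarith
  obtain ⟨s, ⟨hs1, hs2⟩, hsA⟩ := hex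
  have hs0 : (0:ℝ) < s := by linarith
  have hsT₁ : T₁ ≤ s := by have := le_max_right T₂' T₁; linarith
  have hIst : IntervalIntegrable A' volume s t := ((hA'int s hs0).symm.trans (hA'int t ht0))
  have hIB : IntervalIntegrable B volume s t :=
    (intervalIntegrable_iff_integrableOn_Ioc_of_le hs2).mpr (hBint s t (le_of_lt hs0))
  have key : A t - A s = ∫ x in s..t, A' x := by
    rw [hA t (le_of_lt ht0), hA s (le_of_lt hs0)]
    have := intervalIntegral.integral_interval_sub_left (hA'int t ht0) (hA'int s hs0)
    linarith
  have h3 : ∫ x in s..t, A' x ≤ ∫ x in s..t, B x := by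
    refine intervalIntegral.integral_mono_ae_restrict hs2 hIst hIB ?_
    exact ae_restrict_of_ae_restrict_of_subset
      (fun x hx => mem_Ici.mpr (le_trans (le_of_lt hs0) hx.1)) hle
  have h4 : ∫ x in s..t, B x ≤ ∫ x in Ioc s (s + δ), |B x| := by
    rw [intervalIntegral.integral_of_le hs2]
    calc ∫ x in Ioc s t, B x ≤ ∫ x in Ioc s t, |B x| :=
          integral_mono (hBint s t (le_of_lt hs0)) ((hBint s t (le_of_lt hs0)).abs)
            (fun x => le_abs_self _)
      _ ≤ ∫ x in Ioc s (s + δ), |B x| := by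
          refine setIntegral_mono_set ((hBint s (s + δ) (le_of_lt hs0)).abs)
            (Eventually.of_forall (fun x => abs_nonneg _))
            (HasSubset.Subset.eventuallyLE (Ioc_subset_Ioc_right (by linarith)))
  have h5 := hBbd s hsT₁
  have hAt : A t ≤ ε/2 := by linarith
  rw [Real.dist_eq, sub_zero, abs_of_nonneg (hApos t (le_of_lt ht0))]
  linarith
end
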